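/- arXiv:2402.10686 — 6 statements merged into one kernel-verified Lean document; each statement's English description precedes it below -/
import Mathlib

section
/- For all real numbers a, b with 0 < a < 1 and 0 < b < 1, a − b ≤ sqrt( d(a‖b) + d(b‖a) ). -/
/-- Binary KL divergence `d(a‖b)`. -/
noncomputable def binKL (a b : ℝ) : ℝ :=
  a * Real.log (a / b) + (1 - a) * Real.log ((1 - a) / (1 - b))

lemma aux_kl (a b : ℝ) (ha0 : 0 < a) (ha1 : a ≤ 1) (hb0 : 0 < b) (hb1 : b ≤ 1) :
    (a - b) ^ 2 ≤ (a - b) * (Real.log a - Real.log b) := by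
  rcases le_or_gt b a with h | h
  · have hlog : (a - b) / a ≤ Real.log a - Real.log b := by
      have := Real.log_le_sub_one_of_pos (div_pos hb0 ha0)
      rw [Real.log_div hb0.ne' ha0.ne'] at this
      have h2 : b / a - 1 = -((a - b) / a) := by field_simp; ring
      linarith
    have hd : a - b ≤ (a - b) / a := by
      rw [le_div_iff₀ ha0]; nlinarith
    nlinarith
  · have hlog : Real.log a - Real.log b ≤ (a - b) / b := by
      have := Real.log_le_sub_one_of_pos (div_pos ha0 hb0)
      rw [Real.log_div ha0.ne' hb0.ne'] at this
      have h2 : a / b - 1 = (a - b) / b := by field_simp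
      linarith
    have hd : (a - b) / b ≤ a - b := by
      rw [div_le_iff₀ hb0]; nlinarith
    nlinarith

theorem stmt2 (a b : ℝ) (ha0 : 0 < a) (ha1 : a < 1) (hb0 : 0 < b) (hb1 : b < 1) :
    a - b ≤ Real.sqrt (binKL a b + binKL b a) := by
  have key : binKL a b + binKL b a
      = (a - b) * (Real.log a - Real.log b)
        + ((1 - a) - (1 - b)) * (Real.log (1 - a) - Real.log (1 - b)) := by
    unfold binKL
    rw [Real.log_div ha0.ne' hb0.ne', Real.log_div hb0.ne' ha0.ne',
      Real.log_div (by linarith : (1:ℝ) - a ≠ 0) (by linarith : (1:ℝ) - b ≠ 0),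
      Real.log_div (by linarith : (1:ℝ) - b ≠ 0) (by linarith : (1:ℝ) - a ≠ 0)]
    ring
  have h1 := aux_kl a b ha0 ha1.le hb0 hb1.le
  have h2 := aux_kl (1 - a) (1 - b) (by linarith) (by linarith) (by linarith) (by linarith)
  have hsq : (a - b) ^ 2 ≤ binKL a b + binKL b a := by
    rw [key]; nlinarith
  calc a - b ≤ |a - b| := le_abs_self _
    _ = Real.sqrt ((a - b) ^ 2) := (Real.sqrt_sq_eq_abs _).symm
    _ ≤ _ := Real.sqrt_le_sqrt hsq
end

section
/- For every integer K ≥ 2 and all parameter vectors γ, γ' ∈ (0,∞)^K, the KL divergence between the corresponding Dirichlet densities satisfies ∫_{S_K} f_γ(p) · log( f_γ(p) / f_{γ'}(p) ) dp = log( B(γ') / B(γ) ) + Σ_{k=0}^{K−1} (γ_k − γ'_k) · ( ψ(γ_k) − ψ(Σ_{i=0}^{K−1} γ_i) ). -/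
open MeasureTheory

/-- The open standard simplex `S_K` in coordinates `(p_0, …, p_{K-2}) ∈ ℝ^{K-1}`:
all coordinates positive and their sum less than 1 (so that `p_{K-1} = 1 - Σ` is positive). -/
def simplexCoords (K : ℕ) : Set (Fin (K - 1) → ℝ) :=
  {x | (∀ i, 0 < x i) ∧ ∑ i, x i < 1}

/-- The full probability vector `p ∈ ℝ^K` obtained from the coordinates
`(p_0, …, p_{K-2})`, with `p_{K-1} = 1 - Σ_{k < K-1} p_k`. -/
noncomputable def fullProb (K : ℕ) (x : Fin (K - 1) → ℝ) : Fin K → ℝ :=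
  fun k => if h : (k : ℕ) < K - 1 then x ⟨k, h⟩ else 1 - ∑ i, x i

/-- Multivariate Beta function `B(γ) = (∏ₖ Γ(γₖ)) / Γ(Σₖ γₖ)`. -/
noncomputable def multiBeta {K : ℕ} (γ : Fin K → ℝ) : ℝ :=
  (∏ i, Real.Gamma (γ i)) / Real.Gamma (∑ i, γ i)

/-- Dirichlet density `f_γ(p) = (1/B(γ)) ∏ₖ pₖ^(γₖ - 1)` in simplex coordinates. -/
noncomputable def dirichletPdf {K : ℕ} (γ : Fin K → ℝ) (x : Fin (K - 1) → ℝ) : ℝ :=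
  (1 / multiBeta γ) * ∏ k, (fullProb K x k) ^ (γ k - 1)

/-- Digamma function `ψ(x) = Γ'(x)/Γ(x)`. -/
noncomputable def digamma (x : ℝ) : ℝ := deriv Real.Gamma x / Real.Gamma x

open Set

noncomputable section


lemma beta1 (a b : ℝ) (ha : 0 < a) (hb : 0 < b) :
    IntegrableOn (fun t : ℝ => t ^ (a-1) * (1-t) ^ (b-1)) (Ioo 0 1) ∧
    ∫ t in Ioo (0:ℝ) 1, t ^ (a-1) * (1-t) ^ (b-1)
      = Real.Gamma a * Real.Gamma b / Real.Gamma (a+b) := by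
  have hC : IntervalIntegrable (fun x : ℝ => (x:ℂ) ^ ((a:ℂ)-1) * (1-(x:ℂ)) ^ ((b:ℂ)-1))
      volume 0 1 := by
    have := Complex.betaIntegral_convergent (u := a) (v := b) (by simpa) (by simpa)
    simpa using this
  have hIoc : IntegrableOn (fun x : ℝ => (x:ℂ) ^ ((a:ℂ)-1) * (1-(x:ℂ)) ^ ((b:ℂ)-1))
      (Ioc 0 1) := by
    have := hC.1
    simpa [uIoc_of_le (by norm_num : (0:ℝ) ≤ 1)] using this
  have heq : ∀ x ∈ Ioc (0:ℝ) 1,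
      (x:ℂ) ^ ((a:ℂ)-1) * (1-(x:ℂ)) ^ ((b:ℂ)-1)
        = ((x ^ (a-1) * (1-x) ^ (b-1) : ℝ) : ℂ) := by
    intro x hx
    rw [show ((a:ℂ)-1) = ((a-1 : ℝ) : ℂ) by push_cast; ring,
        show ((b:ℂ)-1) = ((b-1 : ℝ) : ℂ) by push_cast; ring,
        show (1-(x:ℂ)) = ((1-x : ℝ) : ℂ) by push_cast; ring,
        ← Complex.ofReal_cpow hx.1.le, ← Complex.ofReal_cpow (by linarith [hx.2] : (0:ℝ) ≤ 1-x)]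
    push_cast; ring
  have hIocR : IntegrableOn (fun t : ℝ => t ^ (a-1) * (1-t) ^ (b-1)) (Ioc 0 1) := by
    have := hIoc.re
    refine (integrable_congr (ae_restrict_of_forall_mem measurableSet_Ioc
      (fun x hx => ?_))).mp this
    rw [heq x hx]; simp
  refine ⟨hIocR.mono_set Ioo_subset_Ioc_self, ?_⟩
  have hbeta := Complex.Gamma_mul_Gamma_eq_betaIntegral
    (s := a) (t := b) (by simpa) (by simpa)
  have hΓ : Complex.Gamma ((a:ℂ)+(b:ℂ)) ≠ 0 := by
    rw [show ((a:ℂ)+(b:ℂ)) = ((a+b:ℝ):ℂ) by push_cast; ring, Complex.Gamma_ofReal]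
    exact_mod_cast (Real.Gamma_pos_of_pos (by linarith)).ne'
  have hval : Complex.betaIntegral a b
      = Complex.Gamma a * Complex.Gamma b / Complex.Gamma ((a:ℂ)+(b:ℂ)) := by
    rw [eq_div_iff hΓ]; linear_combination -hbeta
  rw [Complex.betaIntegral] at hval
  have h1 : (∫ x in (0:ℝ)..1, (x:ℂ) ^ ((a:ℂ)-1) * (1-(x:ℂ)) ^ ((b:ℂ)-1))
      = ∫ x in Ioc (0:ℝ) 1, (x:ℂ) ^ ((a:ℂ)-1) * (1-(x:ℂ)) ^ ((b:ℂ)-1) := by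
    rw [intervalIntegral.integral_of_le (by norm_num)]
  have h2 : (∫ x in Ioc (0:ℝ) 1, (x:ℂ) ^ ((a:ℂ)-1) * (1-(x:ℂ)) ^ ((b:ℂ)-1))
      = ((∫ t in Ioc (0:ℝ) 1, t ^ (a-1) * (1-t) ^ (b-1) : ℝ) : ℂ) := by
    rw [setIntegral_congr_fun measurableSet_Ioc heq]
    exact integral_ofReal
  rw [h1, h2] at hval
  have : ((∫ t in Ioc (0:ℝ) 1, t ^ (a-1) * (1-t) ^ (b-1) : ℝ) : ℂ)
      = ((Real.Gamma a * Real.Gamma b / Real.Gamma (a+b) : ℝ) : ℂ) := by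
    rw [hval, show ((a:ℂ)+(b:ℂ)) = ((a+b:ℝ):ℂ) by push_cast; ring,
      Complex.Gamma_ofReal, Complex.Gamma_ofReal, Complex.Gamma_ofReal]
    push_cast; ring
  have := Complex.ofReal_injective this
  rw [← integral_Ioc_eq_integral_Ioo, this]


def Tset (n : ℕ) : Set (Fin n → ℝ) := {x | (∀ i, 0 < x i) ∧ ∑ i, x i < 1}

def fden {n : ℕ} (a : Fin n → ℝ) (b : ℝ) : (Fin n → ℝ) → ℝ :=
  fun x => (∏ i, x i ^ (a i - 1)) * (1 - ∑ i, x i) ^ (b - 1)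

lemma measurable_sum_coords {n : ℕ} : Measurable (fun x : Fin n → ℝ => ∑ i, x i) :=
  Finset.measurable_sum _ (fun i _ => measurable_pi_apply i)

lemma measurableSet_Tset (n : ℕ) : MeasurableSet (Tset n) := by
  have : Tset n = (⋂ i, (fun x : Fin n → ℝ => x i) ⁻¹' Ioi 0) ∩
      ((fun x : Fin n → ℝ => ∑ i, x i) ⁻¹' Iio 1) := by
    ext x; simp [Tset]
  rw [this]
  exact (MeasurableSet.iInter fun i =>
      (measurable_pi_apply i) measurableSet_Ioi).inter
    (measurable_sum_coords measurableSet_Iio)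

lemma measurable_rpow_const (c : ℝ) : Measurable fun x : ℝ => x ^ c := by
  have h : (fun x : ℝ => x ^ c) = fun x =>
      if x = 0 then (if c = 0 then 1 else 0)
      else Real.exp (Real.log x * c) * (if x < 0 then Real.cos (c * Real.pi) else 1) := by
    funext x
    rcases lt_trichotomy x 0 with hx | hx | hx
    · rw [if_neg hx.ne, if_pos hx, Real.rpow_def_of_neg hx]
    · subst hx
      simp [Real.rpow_def_of_pos, Real.zero_rpow, Real.rpow_zero]
      split_ifs with hc
      · subst hc; simp
      · exact Real.zero_rpow hc
    · rw [if_neg hx.ne', if_neg (not_lt.2 hx.le), mul_one, Real.rpow_def_of_pos hx]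
  rw [h]
  refine Measurable.ite (measurableSet_singleton 0) measurable_const ?_
  exact (Real.measurable_exp.comp (Real.measurable_log.mul measurable_const)).mul
    (Measurable.ite measurableSet_Iio measurable_const measurable_const)

lemma Measurable.rpow_const' {α : Type*} [MeasurableSpace α] {f : α → ℝ} (hf : Measurable f)
    (c : ℝ) : Measurable fun x => f x ^ c := (measurable_rpow_const c).comp hf

lemma measurable_fden {n : ℕ} (a : Fin n → ℝ) (b : ℝ) : Measurable (fden a b) :=
  (Finset.measurable_prod _ fun i _ =>
    (measurable_pi_apply i).rpow_const' _).mul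
    ((measurable_const.sub measurable_sum_coords).rpow_const' _)

lemma fden_nonneg_on {n : ℕ} (a : Fin n → ℝ) (b : ℝ) {x : Fin n → ℝ} (hx : x ∈ Tset n) :
    0 ≤ fden a b x :=
  mul_nonneg (Finset.prod_nonneg fun i _ => Real.rpow_nonneg (hx.1 i).le _)
    (Real.rpow_nonneg (by linarith [hx.2]) _)

theorem dirichlet_aux : ∀ (n : ℕ) (a : Fin n → ℝ) (b : ℝ), (∀ i, 0 < a i) → 0 < b →
    IntegrableOn (fden a b) (Tset n) ∧
    ∫ x in Tset n, fden a b x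
      = (∏ i, Real.Gamma (a i)) * Real.Gamma b / Real.Gamma ((∑ i, a i) + b) := by
  intro n
  induction n with
  | zero =>
    intro a b _ hb
    have hT : Tset 0 = univ := by ext x; simp [Tset]
    have hf : fden a b = fun _ => 1 := by
      funext x; simp [fden, Real.one_rpow]
    have hμ : (volume : Measure (Fin 0 → ℝ)) univ = 1 := by
      rw [volume_pi, Measure.pi_univ]; simp
    constructor
    · rw [hT, hf]
      refine integrableOn_const ?_ (by simp)
      rw [hμ]; norm_num
    · rw [hT, hf]
      simp only [Finset.univ_eq_empty, Finset.prod_empty, Finset.sum_empty, zero_add]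
      rw [setIntegral_const, measureReal_def, hμ]
      simp [Real.Gamma_pos_of_pos hb, div_self (Real.Gamma_pos_of_pos hb).ne']
  | succ n IH =>
    intro a b ha hb
    have hA2 : ∀ i : Fin n, 0 < a i.succ := fun i => ha _
    obtain ⟨IH1, IH2⟩ := IH (fun i => a i.succ) b hA2 hb
    set J := (∏ i : Fin n, Real.Gamma (a i.succ)) * Real.Gamma b /
      Real.Gamma ((∑ i : Fin n, a i.succ) + b) with hJ
    set c := (∑ i : Fin n, a i.succ) + b with hc
    have hcpos : 0 < c := by
      have : 0 ≤ ∑ i : Fin n, a i.succ := Finset.sum_nonneg fun i _ => (hA2 i).le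
      simp only [hc]; linarith
    set S : Set (ℝ × (Fin n → ℝ)) :=
      {p | (0 < p.1 ∧ ∀ i, 0 < p.2 i) ∧ p.1 + ∑ i, p.2 i < 1} with hS
    set F : ℝ × (Fin n → ℝ) → ℝ := fun p =>
      p.1 ^ (a 0 - 1) *
        ((∏ i, p.2 i ^ (a i.succ - 1)) * (1 - p.1 - ∑ i, p.2 i) ^ (b - 1)) with hF
    set h : ℝ × (Fin n → ℝ) → ℝ := S.indicator F with hh
    have measS : MeasurableSet S := by
      have : S = ((fun p : ℝ × (Fin n → ℝ) => p.1) ⁻¹' Ioi 0 ∩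
          ⋂ i, (fun p : ℝ × (Fin n → ℝ) => p.2 i) ⁻¹' Ioi 0) ∩
          ((fun p : ℝ × (Fin n → ℝ) => p.1 + ∑ i, p.2 i) ⁻¹' Iio 1) := by
        ext p; simp [hS, and_assoc]
      rw [this]
      exact ((measurable_fst measurableSet_Ioi).inter
        (MeasurableSet.iInter fun i =>
          ((measurable_pi_apply i).comp measurable_snd) measurableSet_Ioi)).inter
        ((measurable_fst.add (measurable_sum_coords.comp measurable_snd)) measurableSet_Iio)
    have measF : Measurable F := by
      refine (measurable_fst.rpow_const' _).mul ?_
      refine (Finset.measurable_prod _ fun i _ =>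
        ((measurable_pi_apply i).comp measurable_snd).rpow_const' _).mul ?_
      exact ((measurable_const.sub measurable_fst).sub
        (measurable_sum_coords.comp measurable_snd)).rpow_const' _
    have meash : Measurable h := measF.indicator measS
    have h_nonneg : ∀ p, 0 ≤ h p := by
      intro p
      refine indicator_nonneg (fun q hq => ?_) p
      obtain ⟨⟨h1, h2⟩, h3⟩ := hq
      have hsum : 0 ≤ ∑ i, q.2 i := Finset.sum_nonneg fun i _ => (h2 i).le
      exact mul_nonneg (Real.rpow_nonneg h1.le _)
        (mul_nonneg (Finset.prod_nonneg fun i _ => Real.rpow_nonneg (h2 i).le _)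
          (Real.rpow_nonneg (by linarith) _))
    have inner : ∀ t : ℝ, Integrable (fun y => h (t, y)) ∧
        ∫ y, h (t, y) = (Ioo (0:ℝ) 1).indicator
          (fun t => t ^ (a 0 - 1) * (1 - t) ^ (c - 1) * J) t := by
      intro t
      by_cases ht : t ∈ Ioo (0:ℝ) 1
      · obtain ⟨ht0, ht1⟩ := ht
        have hspos : 0 < 1 - t := by linarith
        set s := 1 - t with hsdef
        set G : (Fin n → ℝ) → ℝ := (Tset n).indicator
          (fun z => (∏ i, (s * z i) ^ (a i.succ - 1)) *
            (s * (1 - ∑ i, z i)) ^ (b - 1)) with hGdef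
        have hmem : ∀ y : Fin n → ℝ, ((t, y) ∈ S) ↔ (s⁻¹ • y ∈ Tset n) := by
          intro y
          simp only [hS, Tset, mem_setOf_eq, Pi.smul_apply, smul_eq_mul]
          rw [← Finset.mul_sum]
          constructor
          · rintro ⟨⟨-, h2⟩, h3⟩
            refine ⟨fun i => mul_pos (inv_pos.2 hspos) (h2 i), ?_⟩
            rw [inv_mul_lt_iff₀ hspos, mul_one]
            linarith
          · rintro ⟨h2, h3⟩
            have h2' : ∀ i, 0 < y i := fun i => by
              have := h2 i
              nlinarith [inv_pos.2 hspos]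
            refine ⟨⟨ht0, h2'⟩, ?_⟩
            rw [inv_mul_lt_iff₀ hspos, mul_one] at h3
            linarith
        have hcomp : (fun y => h (t, y)) = fun y => t ^ (a 0 - 1) * G (s⁻¹ • y) := by
          funext y
          by_cases hy : (t, y) ∈ S
          · rw [hh, indicator_of_mem hy, hGdef, indicator_of_mem ((hmem y).1 hy)]
            have e1 : ∀ i : Fin n, s * (s⁻¹ • y) i = y i := by
              intro i; simp [Pi.smul_apply]; field_simp
            have e2 : s * (1 - ∑ i, (s⁻¹ • y) i) = 1 - t - ∑ i, y i := by
              have hsum : ∑ i, (s⁻¹ • y) i = s⁻¹ * ∑ i, y i := by simp [Finset.mul_sum]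
              rw [hsum, mul_sub, mul_one]
              field_simp
              linarith [hsdef]
            simp only [hF]
            rw [e2]
            congr 2
            exact Finset.prod_congr rfl fun i _ => by rw [e1 i]
          · rw [hh, indicator_of_notMem hy, hGdef,
              indicator_of_notMem (fun hz => hy ((hmem y).2 hz)), mul_zero]
        have hGeq : G = (Tset n).indicator
            (fun z => s ^ (c - 1 - (n:ℝ)) * fden (fun i => a i.succ) b z) := by
          refine indicator_congr fun z hz => ?_
          obtain ⟨hz1, hz2⟩ := hz
          have e1 : (∏ i, (s * z i) ^ (a i.succ - 1))
              = s ^ ((∑ i : Fin n, a i.succ) - n) * ∏ i, z i ^ (a i.succ - 1) := by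
            have : ∀ i : Fin n, (s * z i) ^ (a i.succ - 1)
                = s ^ (a i.succ - 1) * z i ^ (a i.succ - 1) := fun i =>
              Real.mul_rpow hspos.le (hz1 i).le
            rw [Finset.prod_congr rfl fun i _ => this i, Finset.prod_mul_distrib,
              ← Real.rpow_sum_of_pos hspos]
            congr 2
            rw [Finset.sum_sub_distrib]
            simp
          have e2 : (s * (1 - ∑ i, z i)) ^ (b - 1)
              = s ^ (b - 1) * (1 - ∑ i, z i) ^ (b - 1) :=
            Real.mul_rpow hspos.le (by linarith)
          rw [e1, e2, fden]
          rw [show s ^ ((∑ i : Fin n, a i.succ) - n) * (∏ i, z i ^ (a i.succ - 1)) *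
              (s ^ (b - 1) * (1 - ∑ i, z i) ^ (b - 1))
              = (s ^ ((∑ i : Fin n, a i.succ) - n) * s ^ (b - 1)) *
                ((∏ i, z i ^ (a i.succ - 1)) * (1 - ∑ i, z i) ^ (b - 1)) by ring,
            ← Real.rpow_add hspos]
          congr 2
          simp only [hc]; ring
        have hGint : Integrable G := by
          rw [hGeq, integrable_indicator_iff (measurableSet_Tset n)]
          exact IH1.const_mul _
        have hGval : ∫ z, G z = s ^ (c - 1 - (n:ℝ)) * J := by
          rw [hGeq, integral_indicator (measurableSet_Tset n), integral_const_mul, IH2, hJ]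
        have hint : Integrable (fun y => h (t, y)) := by
          rw [hcomp]
          exact ((integrable_comp_smul_iff volume G (inv_ne_zero hspos.ne')).2 hGint).const_mul _
        refine ⟨hint, ?_⟩
        rw [hcomp, integral_const_mul, Measure.integral_comp_inv_smul_of_nonneg volume G hspos.le,
          hGval, indicator_of_mem (mem_Ioo.2 ⟨ht0, ht1⟩)]
        rw [Module.finrank_fin_fun, smul_eq_mul]
        rw [show (s:ℝ) ^ (n:ℕ) = s ^ ((n:ℕ):ℝ) from (Real.rpow_natCast s n).symm]
        rw [show s ^ ((n:ℕ):ℝ) * (s ^ (c - 1 - (n:ℝ)) * J) = (s ^ ((n:ℕ):ℝ) * s ^ (c - 1 - (n:ℝ))) * J by ring,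
          ← Real.rpow_add hspos]
        rw [show ((n:ℕ):ℝ) + (c - 1 - (n:ℝ)) = c - 1 by ring]
        ring
      · have hzero : (fun y => h (t, y)) = fun _ => 0 := by
          funext y
          refine indicator_of_notMem (fun hmem => ht ?_) _
          obtain ⟨⟨h1, h2⟩, h3⟩ := hmem
          have : 0 ≤ ∑ i, y i := Finset.sum_nonneg fun i _ => (h2 i).le
          exact ⟨h1, by linarith⟩
        rw [hzero]
        exact ⟨integrable_zero _ _ _, by rw [integral_zero, indicator_of_notMem ht]⟩
    have hbeta := beta1 (a 0) c (ha 0) hcpos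
    have houter_int : Integrable ((Ioo (0:ℝ) 1).indicator
        (fun t => t ^ (a 0 - 1) * (1 - t) ^ (c - 1) * J)) := by
      rw [integrable_indicator_iff measurableSet_Ioo]
      exact hbeta.1.mul_const _
    have hinth : Integrable h ((volume : Measure ℝ).prod volume) := by
      refine (integrable_prod_iff meash.aestronglyMeasurable).2 ⟨?_, ?_⟩
      · exact Filter.Eventually.of_forall fun t => (inner t).1
      · have : (fun t => ∫ y, ‖h (t, y)‖) = (Ioo (0:ℝ) 1).indicator
            (fun t => t ^ (a 0 - 1) * (1 - t) ^ (c - 1) * J) := by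
          funext t
          have hnn : (fun y => ‖h (t, y)‖) = fun y => h (t, y) :=
            funext fun y => Real.norm_of_nonneg (h_nonneg _)
          rw [hnn, (inner t).2]
        rw [this]
        exact houter_int
    have hvalh : ∫ p, h p ∂((volume : Measure ℝ).prod volume)
        = Real.Gamma (a 0) * Real.Gamma c / Real.Gamma (a 0 + c) * J := by
      rw [integral_prod _ hinth]
      have : (fun t => ∫ y, h (t, y)) = (Ioo (0:ℝ) 1).indicator
          (fun t => t ^ (a 0 - 1) * (1 - t) ^ (c - 1) * J) :=
        funext fun t => (inner t).2
      rw [this, integral_indicator measurableSet_Ioo]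
      rw [show (fun t : ℝ => t ^ (a 0 - 1) * (1 - t) ^ (c - 1) * J)
          = fun t : ℝ => (t ^ (a 0 - 1) * (1 - t) ^ (c - 1)) * J from rfl,
        integral_mul_const, hbeta.2]
    set e := MeasurableEquiv.piFinSuccAbove (fun _ : Fin (n+1) => ℝ) 0 with he
    have mp : MeasurePreserving e (volume : Measure (Fin (n+1) → ℝ))
        ((volume : Measure ℝ).prod (volume : Measure (Fin n → ℝ))) := by
      have h0 := measurePreserving_piFinSuccAbove (fun _ : Fin (n+1) => (volume : Measure ℝ)) 0
      rwa [← volume_pi, ← volume_pi] at h0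
    have hcompe : ∀ x : Fin (n+1) → ℝ, h (e x) = (Tset (n+1)).indicator (fden a b) x := by
      intro x
      have hex : e x = (x 0, fun j : Fin n => x j.succ) := rfl
      rw [hex]
      have hmem : ((x 0, fun j : Fin n => x j.succ) ∈ S) ↔ x ∈ Tset (n+1) := by
        simp only [hS, Tset, mem_setOf_eq]
        rw [Fin.forall_fin_succ, Fin.sum_univ_succ]
      by_cases hx : x ∈ Tset (n+1)
      · rw [hh, indicator_of_mem (hmem.2 hx), indicator_of_mem hx]
        simp only [hF, fden]
        rw [Fin.prod_univ_succ, Fin.sum_univ_succ,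
          show (1 : ℝ) - x 0 - ∑ i : Fin n, x i.succ
            = 1 - (x 0 + ∑ i : Fin n, x i.succ) by ring]
        ring
      · rw [hh, indicator_of_notMem (fun hS' => hx (hmem.1 hS')), indicator_of_notMem hx]
    have hint_main : IntegrableOn (fden a b) (Tset (n+1)) := by
      rw [← integrable_indicator_iff (measurableSet_Tset (n+1))]
      have heq2 : (Tset (n+1)).indicator (fden a b) = h ∘ e := funext fun x => (hcompe x).symm
      rw [heq2]
      exact (mp.integrable_comp_emb e.measurableEmbedding).2 hinth
    refine ⟨hint_main, ?_⟩
    have htrans : ∫ x in Tset (n+1), fden a b x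
        = ∫ p, h p ∂((volume : Measure ℝ).prod volume) := by
      rw [← integral_indicator (measurableSet_Tset (n+1))]
      calc ∫ x, (Tset (n+1)).indicator (fden a b) x = ∫ x, h (e x) := by
            congr 1; funext x; rw [hcompe]
        _ = _ := mp.integral_comp' h
    rw [htrans, hvalh, hJ]
    rw [Fin.prod_univ_succ, Fin.sum_univ_succ]
    have hΓc : Real.Gamma c ≠ 0 := (Real.Gamma_pos_of_pos hcpos).ne'
    have hΓ2 : Real.Gamma (a 0 + c) ≠ 0 := by
      refine (Real.Gamma_pos_of_pos ?_).ne'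
      have := ha 0; linarith
    rw [show a 0 + ∑ i : Fin n, a i.succ + b = a 0 + c by rw [hc]; ring]
    field_simp

lemma fullProb_castSucc {n : ℕ} (x : Fin n → ℝ) (i : Fin n) :
    fullProb (n+1) x i.castSucc = x i := by
  simp only [fullProb, Nat.add_sub_cancel, Fin.coe_castSucc, i.isLt, dif_pos, Fin.eta]

lemma fullProb_last {n : ℕ} (x : Fin n → ℝ) :
    fullProb (n+1) x (Fin.last n) = 1 - ∑ i, x i := by
  simp only [fullProb, Nat.add_sub_cancel, Fin.val_last, lt_self_iff_false, dif_neg,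
    not_false_iff]
  rfl

lemma prod_fullProb_eq {n : ℕ} (cpar : Fin (n+1) → ℝ) :
    (fun x : Fin n → ℝ => ∏ k, fullProb (n+1) x k ^ (cpar k - 1))
      = fden (fun i => cpar i.castSucc) (cpar (Fin.last n)) := by
  funext x
  rw [Fin.prod_univ_castSucc]
  simp only [fden, fullProb_last]
  congr 1
  exact Finset.prod_congr rfl fun i _ => by rw [fullProb_castSucc]

lemma dirichlet_full (n : ℕ) (cpar : Fin (n+1) → ℝ) (hc : ∀ i, 0 < cpar i) :
    IntegrableOn (fun x : Fin n → ℝ => ∏ k, fullProb (n+1) x k ^ (cpar k - 1)) (Tset n) ∧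
    ∫ x in Tset n, ∏ k, fullProb (n+1) x k ^ (cpar k - 1) = multiBeta cpar := by
  have h := dirichlet_aux n (fun i => cpar i.castSucc) (cpar (Fin.last n))
    (fun i => hc _) (hc _)
  rw [prod_fullProb_eq]
  refine ⟨h.1, ?_⟩
  rw [h.2, multiBeta, Fin.prod_univ_castSucc, Fin.sum_univ_castSucc]

lemma fullProb_pos {n : ℕ} {x : Fin n → ℝ} (hx : x ∈ Tset n) (j : Fin (n+1)) :
    0 < fullProb (n+1) x j := by
  have hsum_eq : (∑ i : Fin (n + 1 - 1), x i) = ∑ i : Fin n, x i := rfl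
  simp only [fullProb, Nat.add_sub_cancel]
  split_ifs with hj
  · exact hx.1 _
  · rw [hsum_eq]; linarith [hx.2]

lemma fullProb_lt_one {n : ℕ} (hn : 0 < n) {x : Fin n → ℝ} (hx : x ∈ Tset n)
    (j : Fin (n+1)) : fullProb (n+1) x j < 1 := by
  have hsum_eq : (∑ i : Fin (n + 1 - 1), x i) = ∑ i : Fin n, x i := rfl
  simp only [fullProb, Nat.add_sub_cancel]
  split_ifs with hj
  · have hle : x ⟨(j:ℕ), hj⟩ ≤ ∑ i, x i :=
      Finset.single_le_sum (fun i _ => (hx.1 i).le) (Finset.mem_univ _)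
    linarith [hx.2]
  · have hpos : 0 < ∑ i, x i :=
      Finset.sum_pos (fun i _ => hx.1 i) ⟨⟨0, hn⟩, Finset.mem_univ _⟩
    rw [hsum_eq]
    linarith

lemma measurable_fullProb {n : ℕ} (j : Fin (n+1)) :
    Measurable (fun x : Fin n → ℝ => fullProb (n+1) x j) := by
  simp only [fullProb, Nat.add_sub_cancel]
  split_ifs with hj
  · exact measurable_pi_apply _
  · exact measurable_const.sub measurable_sum_coords

lemma dirichlet_moment (n : ℕ) (hn : 0 < n) (cpar : Fin (n+1) → ℝ) (hc : ∀ i, 0 < cpar i)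
    (k : Fin (n+1)) :
    IntegrableOn (fun x : Fin n → ℝ =>
        (∏ j, fullProb (n+1) x j ^ (cpar j - 1)) * Real.log (fullProb (n+1) x k)) (Tset n) ∧
    ∫ x in Tset n, (∏ j, fullProb (n+1) x j ^ (cpar j - 1)) * Real.log (fullProb (n+1) x k)
      = multiBeta cpar * (digamma (cpar k) - digamma (∑ i, cpar i)) := by
  set μ := (volume : Measure (Fin n → ℝ)).restrict (Tset n) with hμ
  set u : (Fin n → ℝ) → ℝ := fun x => ∏ j, fullProb (n+1) x j ^ (cpar j - 1) with hu
  set Pk : (Fin n → ℝ) → ℝ := fun x => fullProb (n+1) x k with hPkdef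
  have measu : Measurable u :=
    Finset.measurable_prod _ fun j _ => (measurable_fullProb j).rpow_const' _
  have measPk : Measurable Pk := measurable_fullProb k
  set ε : ℝ := cpar k / 4 with hε
  have hεpos : 0 < ε := by have := hc k; simp only [hε]; linarith
  set F : ℝ → (Fin n → ℝ) → ℝ := fun t x => u x * Pk x ^ t with hF
  set F' : ℝ → (Fin n → ℝ) → ℝ := fun t x => u x * (Pk x ^ t * Real.log (Pk x)) with hF'
  set c' : Fin (n+1) → ℝ := fun j => if j = k then cpar k - 2*ε else cpar j with hc'
  have hc'pos : ∀ j, 0 < c' j := by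
    intro j
    simp only [hc']
    split_ifs with hj
    · have := hc k; simp only [hε]; linarith
    · exact hc j
  set bound : (Fin n → ℝ) → ℝ := fun x => ε⁻¹ * ∏ j, fullProb (n+1) x j ^ (c' j - 1)
    with hbounddef
  have key : ∀ x ∈ Tset n, ∀ t ∈ Metric.ball (0:ℝ) ε, |F' t x| ≤ bound x := by
    intro x hx t ht
    have hP : 0 < Pk x := fullProb_pos hx k
    have hP1 : Pk x < 1 := fullProb_lt_one hn hx k
    have hu0 : 0 ≤ u x :=
      Finset.prod_nonneg fun j _ => Real.rpow_nonneg (fullProb_pos hx j).le _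
    have htlt : -ε < t ∧ t < ε := abs_lt.1 (by simpa [Real.dist_eq] using ht)
    have habs : |F' t x| = u x * (Pk x ^ t * |Real.log (Pk x)|) := by
      rw [hF', abs_mul, abs_mul, abs_of_nonneg hu0,
        abs_of_nonneg (Real.rpow_nonneg hP.le t)]
    have h1 : Pk x ^ t ≤ Pk x ^ (-ε) :=
      Real.rpow_le_rpow_of_exponent_ge hP hP1.le (by linarith [htlt.1])
    have h5 : ((Pk x)⁻¹) ^ ε = Pk x ^ (-ε) := by
      rw [Real.inv_rpow hP.le, ← Real.rpow_neg hP.le]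
    have h2 : |Real.log (Pk x)| ≤ ε⁻¹ * Pk x ^ (-ε) := by
      rw [abs_of_nonpos (Real.log_nonpos hP.le hP1.le), ← Real.log_inv]
      have hinv : 0 < (Pk x)⁻¹ := inv_pos.2 hP
      have h3 : Real.log ((Pk x)⁻¹) = Real.log (((Pk x)⁻¹) ^ ε) / ε := by
        rw [Real.log_rpow hinv]; field_simp
      have h4 : Real.log (((Pk x)⁻¹) ^ ε) ≤ ((Pk x)⁻¹) ^ ε := by
        have := Real.log_le_sub_one_of_pos (Real.rpow_pos_of_pos hinv ε); linarith
      rw [h3, ← h5]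
      calc Real.log (((Pk x)⁻¹) ^ ε) / ε ≤ ((Pk x)⁻¹) ^ ε / ε := by gcongr
        _ = ε⁻¹ * ((Pk x)⁻¹) ^ ε := by ring
    have hmul : Pk x ^ (-ε) * Pk x ^ (-ε) = Pk x ^ (-(2*ε)) := by
      rw [← Real.rpow_add hP]; congr 1; ring
    have hb : bound x = ε⁻¹ * (u x * Pk x ^ (-(2*ε))) := by
      simp only [hbounddef, hu]
      congr 1
      have hfac : ∀ j, fullProb (n+1) x j ^ (c' j - 1)
          = fullProb (n+1) x j ^ (cpar j - 1) *
            (if j = k then Pk x ^ (-(2*ε)) else 1) := by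
        intro j
        by_cases hj : j = k
        · subst hj
          simp only [hc', if_pos rfl, hPkdef]
          rw [if_pos trivial, ← Real.rpow_add (fullProb_pos hx j)]
          congr 1; ring
        · simp [hc', hj]
      rw [Finset.prod_congr rfl (fun j _ => hfac j), Finset.prod_mul_distrib,
        Finset.prod_ite_eq' Finset.univ k (fun _ => Pk x ^ (-(2*ε)))]
      simp
    have hchain : u x * (Pk x ^ t * |Real.log (Pk x)|)
        ≤ u x * (Pk x ^ (-ε) * (ε⁻¹ * Pk x ^ (-ε))) := by
      refine mul_le_mul_of_nonneg_left ?_ hu0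
      exact mul_le_mul h1 h2 (abs_nonneg _) (Real.rpow_nonneg hP.le _)
    rw [habs, hb]
    calc u x * (Pk x ^ t * |Real.log (Pk x)|)
        ≤ u x * (Pk x ^ (-ε) * (ε⁻¹ * Pk x ^ (-ε))) := hchain
      _ = ε⁻¹ * (u x * (Pk x ^ (-ε) * Pk x ^ (-ε))) := by ring
      _ = ε⁻¹ * (u x * Pk x ^ (-(2*ε))) := by rw [hmul]
  have hbint : Integrable bound μ := ((dirichlet_full n c' hc'pos).1.const_mul ε⁻¹)
  have hF0int : Integrable (F 0) μ := by
    have h := (dirichlet_full n cpar hc).1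
    have heq : F 0 = u := by funext x; simp [hF, Real.rpow_zero]
    rw [heq]; exact h
  have main := hasDerivAt_integral_of_dominated_loc_of_deriv_le (μ := μ) (F := F) (F' := F')
    (x₀ := 0) (bound := bound) (Metric.ball_mem_nhds 0 hεpos)
    (Filter.Eventually.of_forall fun t =>
      (measu.mul (measPk.rpow_const' t)).aestronglyMeasurable)
    hF0int
    ((measu.mul ((measPk.rpow_const' 0).mul (Real.measurable_log.comp measPk))).aestronglyMeasurable)
    (ae_restrict_of_forall_mem (measurableSet_Tset n) fun x hx => fun t ht => by
      rw [Real.norm_eq_abs]; exact key x hx t ht)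
    hbint
    (ae_restrict_of_forall_mem (measurableSet_Tset n) fun x hx => fun t _ => by
      have hP : 0 < Pk x := fullProb_pos hx k
      have h := ((Real.hasStrictDerivAt_const_rpow hP t).hasDerivAt).const_mul (u x)
      simpa [hF, hF'] using h)
  obtain ⟨hF'int, hderiv⟩ := main
  set C := ∏ j ∈ Finset.univ.erase k, Real.Gamma (cpar j) with hC
  set Sc := ∑ j, cpar j with hSc
  have hScpos : 0 < Sc :=
    Finset.sum_pos (fun j _ => hc j) ⟨k, Finset.mem_univ k⟩
  set Gf : ℝ → ℝ := fun t => Real.Gamma (cpar k + t) * C / Real.Gamma (Sc + t) with hGf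
  have hEq : ∀ t ∈ Metric.ball (0:ℝ) ε, ∫ x, F t x ∂μ = Gf t := by
    intro t ht
    have htlt : -ε < t ∧ t < ε := abs_lt.1 (by simpa [Real.dist_eq] using ht)
    set ct : Fin (n+1) → ℝ := Function.update cpar k (cpar k + t) with hct
    have hctpos : ∀ j, 0 < ct j := by
      intro j
      rcases eq_or_ne j k with hj | hj
      · subst hj
        rw [hct, Function.update_self]
        have := hc j; simp only [hε] at htlt; linarith [htlt.1]
      · rw [hct, Function.update_of_ne hj]
        exact hc j
    have hfun : ∀ x ∈ Tset n, F t x = ∏ j, fullProb (n+1) x j ^ (ct j - 1) := by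
      intro x hx
      have hP : 0 < Pk x := fullProb_pos hx k
      have hrhs : ∏ j, fullProb (n+1) x j ^ (ct j - 1)
          = fullProb (n+1) x k ^ (cpar k + t - 1) *
            ∏ j ∈ Finset.univ.erase k, fullProb (n+1) x j ^ (cpar j - 1) := by
        rw [← Finset.mul_prod_erase Finset.univ _ (Finset.mem_univ k), hct,
          Function.update_self]
        congr 1
        exact Finset.prod_congr rfl fun j hj =>
          by rw [Function.update_of_ne (Finset.mem_erase.1 hj).1]
      rw [hrhs]
      simp only [hF, hu]
      rw [← Finset.mul_prod_erase Finset.univ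
        (fun j => fullProb (n+1) x j ^ (cpar j - 1)) (Finset.mem_univ k)]
      have : fullProb (n+1) x k ^ (cpar k + t - 1)
          = fullProb (n+1) x k ^ (cpar k - 1) * Pk x ^ t := by
        rw [hPkdef, ← Real.rpow_add hP]
        congr 1; ring
      rw [this]; ring
    have h2 := (dirichlet_full n ct hctpos).2
    have hsum : ∑ j, ct j = Sc + t := by
      rw [hct, Finset.sum_update_of_mem (Finset.mem_univ k), hSc,
        ← Finset.add_sum_erase Finset.univ cpar (Finset.mem_univ k), Finset.erase_eq]
      ring
    have hprodct : ∏ j, Real.Gamma (ct j) = Real.Gamma (cpar k + t) * C := by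
      rw [← Finset.mul_prod_erase Finset.univ _ (Finset.mem_univ k), hct,
        Function.update_self, hC]
      congr 1
      exact Finset.prod_congr rfl fun j hj =>
        by rw [Function.update_of_ne (Finset.mem_erase.1 hj).1]
    calc ∫ x, F t x ∂μ = ∫ x in Tset n, ∏ j, fullProb (n+1) x j ^ (ct j - 1) := by
          rw [hμ]
          exact setIntegral_congr_fun (measurableSet_Tset n) hfun
      _ = multiBeta ct := h2
      _ = Gf t := by rw [multiBeta, hprodct, hsum, hGf]
  have hGamma_ne : ∀ y : ℝ, 0 < y → ∀ m : ℕ, y ≠ -(m:ℝ) := by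
    intro y hy m heq
    have h0 : (0:ℝ) ≤ (m:ℝ) := Nat.cast_nonneg m
    rw [heq] at hy; linarith
  have hdG1 : HasDerivAt (fun t => Real.Gamma (cpar k + t)) (deriv Real.Gamma (cpar k)) 0 := by
    have hg : HasDerivAt Real.Gamma (deriv Real.Gamma (cpar k)) (cpar k + 0) := by
      simpa using (Real.differentiableAt_Gamma (hGamma_ne _ (hc k))).hasDerivAt
    simpa [Function.comp_def] using hg.comp 0 ((hasDerivAt_id (0:ℝ)).const_add (cpar k))
  have hdG2 : HasDerivAt (fun t => Real.Gamma (Sc + t)) (deriv Real.Gamma Sc) 0 := by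
    have hg : HasDerivAt Real.Gamma (deriv Real.Gamma Sc) (Sc + 0) := by
      simpa using (Real.differentiableAt_Gamma (hGamma_ne _ hScpos)).hasDerivAt
    simpa [Function.comp_def] using hg.comp 0 ((hasDerivAt_id (0:ℝ)).const_add Sc)
  have hΓS : Real.Gamma Sc ≠ 0 := (Real.Gamma_pos_of_pos hScpos).ne'
  have hΓk : Real.Gamma (cpar k) ≠ 0 := (Real.Gamma_pos_of_pos (hc k)).ne'
  have hdGf : HasDerivAt Gf
      ((deriv Real.Gamma (cpar k) * C * Real.Gamma Sc
        - Real.Gamma (cpar k) * C * deriv Real.Gamma Sc) / Real.Gamma Sc ^ 2) 0 := by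
    have h1 := (hdG1.mul_const C).div hdG2 (by simpa using hΓS)
    simpa [hGf, Pi.div_def] using h1
  have hEqEv : (fun t => ∫ x, F t x ∂μ) =ᶠ[nhds (0:ℝ)] Gf := by
    filter_upwards [Metric.ball_mem_nhds (0:ℝ) hεpos] with t ht using hEq t ht
  have hderiv2 : HasDerivAt (fun t => ∫ x, F t x ∂μ)
      ((deriv Real.Gamma (cpar k) * C * Real.Gamma Sc
        - Real.Gamma (cpar k) * C * deriv Real.Gamma Sc) / Real.Gamma Sc ^ 2) 0 :=
    hdGf.congr_of_eventuallyEq hEqEv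
  have huniq : ∫ x, F' 0 x ∂μ
      = (deriv Real.Gamma (cpar k) * C * Real.Gamma Sc
        - Real.Gamma (cpar k) * C * deriv Real.Gamma Sc) / Real.Gamma Sc ^ 2 :=
    hderiv.unique hderiv2
  have hF'0 : F' 0 = fun x => u x * Real.log (Pk x) := by
    funext x; simp [hF', Real.rpow_zero]
  have hBeq : multiBeta cpar * (digamma (cpar k) - digamma Sc)
      = (deriv Real.Gamma (cpar k) * C * Real.Gamma Sc
        - Real.Gamma (cpar k) * C * deriv Real.Gamma Sc) / Real.Gamma Sc ^ 2 := by
    rw [multiBeta, digamma, digamma,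
      ← Finset.mul_prod_erase Finset.univ _ (Finset.mem_univ k), ← hC, ← hSc]
    field_simp
  constructor
  · have heqf : (fun x : Fin n → ℝ =>
        (∏ j, fullProb (n+1) x j ^ (cpar j - 1)) * Real.log (fullProb (n+1) x k))
        = F' 0 := by rw [hF'0]
    rw [heqf]
    exact hF'int
  · calc ∫ x in Tset n, (∏ j, fullProb (n+1) x j ^ (cpar j - 1)) *
          Real.log (fullProb (n+1) x k)
        = ∫ x, F' 0 x ∂μ := by simp only [hF'0, hu, hPkdef, hμ]
      _ = _ := by rw [huniq, hBeq]

/-- KL divergence between two Dirichlet densities. -/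
theorem stmt6 (K : ℕ) (hK : 2 ≤ K) (γ γ' : Fin K → ℝ)
    (hγ : ∀ i, 0 < γ i) (hγ' : ∀ i, 0 < γ' i) :
    ∫ x in simplexCoords K, dirichletPdf γ x * Real.log (dirichletPdf γ x / dirichletPdf γ' x)
      = Real.log (multiBeta γ' / multiBeta γ)
        + ∑ k, (γ k - γ' k) * (digamma (γ k) - digamma (∑ i, γ i)) := by
  obtain ⟨n, rfl⟩ : ∃ n, K = n + 1 := ⟨K - 1, by omega⟩
  have hn : 0 < n := by omega
  have hBpos : ∀ (c : Fin (n+1) → ℝ), (∀ i, 0 < c i) → 0 < multiBeta c := by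
    intro c hcp
    exact div_pos (Finset.prod_pos fun i _ => Real.Gamma_pos_of_pos (hcp i))
      (Real.Gamma_pos_of_pos (Finset.sum_pos (fun i _ => hcp i) ⟨0, Finset.mem_univ 0⟩))
  have hBγ := hBpos γ hγ
  have hBγ' := hBpos γ' hγ'
  have hfull := dirichlet_full n γ hγ
  have hmom := fun k => dirichlet_moment n hn γ hγ k
  have hptwise : ∀ x ∈ Tset n,
      dirichletPdf γ x * Real.log (dirichletPdf γ x / dirichletPdf γ' x)
      = (1 / multiBeta γ) * Real.log (multiBeta γ' / multiBeta γ) *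
          (∏ j, fullProb (n+1) x j ^ (γ j - 1))
        + ∑ k, ((1 / multiBeta γ) * (γ k - γ' k)) *
            ((∏ j, fullProb (n+1) x j ^ (γ j - 1)) * Real.log (fullProb (n+1) x k)) := by
    intro x hx
    have hPpos : ∀ j, 0 < fullProb (n+1) x j := fullProb_pos hx
    have hupos : 0 < ∏ j, fullProb (n+1) x j ^ (γ j - 1) :=
      Finset.prod_pos fun j _ => Real.rpow_pos_of_pos (hPpos j) _
    have hvpos : 0 < ∏ j, fullProb (n+1) x j ^ (γ' j - 1) :=
      Finset.prod_pos fun j _ => Real.rpow_pos_of_pos (hPpos j) _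
    have hlogu : ∀ (c : Fin (n+1) → ℝ),
        Real.log (∏ j, fullProb (n+1) x j ^ (c j - 1))
        = ∑ j, (c j - 1) * Real.log (fullProb (n+1) x j) := by
      intro c
      rw [Real.log_prod (fun j _ => (Real.rpow_pos_of_pos (hPpos j) _).ne')]
      exact Finset.sum_congr rfl fun j _ => Real.log_rpow (hPpos j) _
    have hd1 : dirichletPdf γ x = (1 / multiBeta γ) * ∏ j, fullProb (n+1) x j ^ (γ j - 1) := rfl
    have hd2 : dirichletPdf γ' x = (1 / multiBeta γ') * ∏ j, fullProb (n+1) x j ^ (γ' j - 1) := rfl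
    have hdpos : 0 < dirichletPdf γ x := by
      rw [hd1]; positivity
    have hdpos' : 0 < dirichletPdf γ' x := by
      rw [hd2]; positivity
    have hlograt : Real.log (dirichletPdf γ x / dirichletPdf γ' x)
        = Real.log (multiBeta γ' / multiBeta γ)
          + ∑ k, (γ k - γ' k) * Real.log (fullProb (n+1) x k) := by
      rw [Real.log_div hdpos.ne' hdpos'.ne', hd1, hd2,
        Real.log_mul (by positivity) hupos.ne', Real.log_mul (by positivity) hvpos.ne',
        hlogu γ, hlogu γ', Real.log_div hBγ'.ne' hBγ.ne',
        one_div, one_div, Real.log_inv, Real.log_inv]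
      rw [show (∑ k, (γ k - γ' k) * Real.log (fullProb (n+1) x k))
          = (∑ j, (γ j - 1) * Real.log (fullProb (n+1) x j))
            - ∑ j, (γ' j - 1) * Real.log (fullProb (n+1) x j) from by
        rw [← Finset.sum_sub_distrib]
        exact Finset.sum_congr rfl fun j _ => by ring]
      ring
    rw [hlograt, hd1]
    rw [show (∑ k, (1 / multiBeta γ) * (γ k - γ' k) *
        ((∏ j, fullProb (n+1) x j ^ (γ j - 1)) * Real.log (fullProb (n+1) x k)))
        = (1 / multiBeta γ) * (∏ j, fullProb (n+1) x j ^ (γ j - 1)) *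
          ∑ k, (γ k - γ' k) * Real.log (fullProb (n+1) x k) from by
      rw [Finset.mul_sum]; exact Finset.sum_congr rfl fun k _ => by ring]
    ring
  show ∫ x in Tset n,
      dirichletPdf γ x * Real.log (dirichletPdf γ x / dirichletPdf γ' x)
      = Real.log (multiBeta γ' / multiBeta γ)
        + ∑ k, (γ k - γ' k) * (digamma (γ k) - digamma (∑ i, γ i))
  rw [setIntegral_congr_fun (measurableSet_Tset n) hptwise]
  have hint1 : IntegrableOn (fun x : Fin n → ℝ =>
      (1 / multiBeta γ) * Real.log (multiBeta γ' / multiBeta γ) *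
        (∏ j, fullProb (n+1) x j ^ (γ j - 1))) (Tset n) :=
    hfull.1.const_mul _
  have hint2 : ∀ k : Fin (n+1), IntegrableOn (fun x : Fin n → ℝ =>
      ((1 / multiBeta γ) * (γ k - γ' k)) *
        ((∏ j, fullProb (n+1) x j ^ (γ j - 1)) * Real.log (fullProb (n+1) x k))) (Tset n) :=
    fun k => (hmom k).1.const_mul _
  rw [integral_add hint1 (integrable_finset_sum _ fun k _ => hint2 k),
    integral_finset_sum _ fun k _ => hint2 k]
  have hterm1 : ∫ x in Tset n, (1 / multiBeta γ) * Real.log (multiBeta γ' / multiBeta γ) *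
      (∏ j, fullProb (n+1) x j ^ (γ j - 1))
      = Real.log (multiBeta γ' / multiBeta γ) := by
    rw [integral_const_mul, hfull.2]
    field_simp
  have hterm2 : ∀ k : Fin (n+1), ∫ x in Tset n, ((1 / multiBeta γ) * (γ k - γ' k)) *
      ((∏ j, fullProb (n+1) x j ^ (γ j - 1)) * Real.log (fullProb (n+1) x k))
      = (γ k - γ' k) * (digamma (γ k) - digamma (∑ i, γ i)) := by
    intro k
    rw [integral_const_mul, (hmom k).2]
    field_simp
  rw [hterm1]
  congr 1
  exact Finset.sum_congr rfl fun k _ => hterm2 k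
end
end

section
/- (Proposition 2, true-label-confidence disclosure.) Fix reals ε_e > 0, Δ ≥ 0, ε_a with Δ/(1+Δ) < ε_a < 1. Let g^out be the Beta density on (0,1) with parameters ((1−ε_a)/ε_e, ε_a/ε_e) and g^in the Beta density with parameters ((1+Δ)(1−ε_a)/ε_e, (ε_a(1+Δ)−Δ)/ε_e). Then for every measurable set A ⊆ (0,1), ∫_A g^out(t) dt − ∫_A g^in(t) dt ≤ sqrt( (Δ(1−ε_a)/ε_e) · ( ψ((1+Δ)(1−ε_a)/ε_e) − ψ((1−ε_a)/ε_e) + ψ(ε_a/ε_e) − ψ((ε_a(1+Δ)−Δ)/ε_e) ) ). -/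
open MeasureTheory

/-- Beta density on `(0,1)` with parameters `(a, b)`. -/
noncomputable def betaPdf (a b t : ℝ) : ℝ :=
  t ^ (a - 1) * (1 - t) ^ (b - 1) / (Real.Gamma a * Real.Gamma b / Real.Gamma (a + b))

open Set


lemma complex_eq_real_on_Ioo {a b : ℝ} {t : ℝ} (ht : t ∈ Set.Ioo (0:ℝ) 1) :
    (t:ℂ) ^ ((a:ℂ)-1) * (1-(t:ℂ)) ^ ((b:ℂ)-1) = ((t ^ (a-1) * (1-t) ^ (b-1) : ℝ) : ℂ) := by
  rw [show ((a:ℂ)-1) = ((a-1 : ℝ) : ℂ) by push_cast; ring,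
      show ((b:ℂ)-1) = ((b-1 : ℝ) : ℂ) by push_cast; ring,
      show (1-(t:ℂ)) = ((1-t : ℝ) : ℂ) by push_cast; ring,
      ← Complex.ofReal_cpow ht.1.le, ← Complex.ofReal_cpow (by linarith [ht.2] : (0:ℝ) ≤ 1 - t),
      ← Complex.ofReal_mul]

lemma betaFun_integrableOn {a b : ℝ} (ha : 0 < a) (hb : 0 < b) :
    IntegrableOn (fun t : ℝ => t ^ (a-1) * (1-t) ^ (b-1)) (Set.Ioo 0 1) := by
  have hc := Complex.betaIntegral_convergent (u := (a:ℂ)) (v := (b:ℂ)) (by simpa) (by simpa)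
  rw [intervalIntegrable_iff_integrableOn_Ioc_of_le (by norm_num)] at hc
  have hre : IntegrableOn (fun x : ℝ =>
      ((x:ℂ) ^ ((a:ℂ)-1) * (1-(x:ℂ)) ^ ((b:ℂ)-1)).re) (Set.Ioc 0 1) := hc.re
  have h2 : IntegrableOn (fun x : ℝ =>
      ((x:ℂ) ^ ((a:ℂ)-1) * (1-(x:ℂ)) ^ ((b:ℂ)-1)).re) (Set.Ioo 0 1) :=
    hre.mono_set Set.Ioo_subset_Ioc_self
  refine h2.congr_fun (fun t ht => ?_) measurableSet_Ioo
  dsimp only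
  rw [complex_eq_real_on_Ioo ht, Complex.ofReal_re]

lemma betaFun_integral {a b : ℝ} (ha : 0 < a) (hb : 0 < b) :
    ∫ t in Set.Ioo (0:ℝ) 1, t ^ (a-1) * (1-t) ^ (b-1)
      = Real.Gamma a * Real.Gamma b / Real.Gamma (a+b) := by
  have hc := Complex.Gamma_mul_Gamma_eq_betaIntegral (s := (a:ℂ)) (t := (b:ℂ))
      (by simpa) (by simpa)
  have hB : Complex.betaIntegral a b
      = ((∫ t in Set.Ioo (0:ℝ) 1, t ^ (a-1) * (1-t) ^ (b-1) : ℝ) : ℂ) := by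
    rw [Complex.betaIntegral, intervalIntegral.integral_of_le (by norm_num : (0:ℝ) ≤ 1),
        MeasureTheory.integral_Ioc_eq_integral_Ioo,
        setIntegral_congr_fun measurableSet_Ioo
          (fun t (ht : t ∈ Set.Ioo (0:ℝ) 1) => complex_eq_real_on_Ioo (a := a) (b := b) ht)]
    exact _root_.integral_ofReal
  rw [hB, show ((a:ℂ)+(b:ℂ)) = ((a+b:ℝ):ℂ) by push_cast; ring] at hc
  simp only [Complex.Gamma_ofReal] at hc
  have h2 : Real.Gamma a * Real.Gamma b
      = Real.Gamma (a+b) * ∫ t in Set.Ioo (0:ℝ) 1, t ^ (a-1) * (1-t) ^ (b-1) := by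
    exact_mod_cast hc
  have hG : Real.Gamma (a+b) ≠ 0 := (Real.Gamma_pos_of_pos (by linarith)).ne'
  field_simp
  linarith [h2]


lemma abs_log_le_rpow {t η : ℝ} (ht : t ∈ Set.Ioo (0:ℝ) 1) (hη : 0 < η) :
    |Real.log t| ≤ η⁻¹ * t ^ (-η) := by
  obtain ⟨ht0, ht1⟩ := ht
  have hlt : Real.log t < 0 := Real.log_neg ht0 ht1
  rw [abs_of_neg hlt]
  have h1 : Real.log ((t ^ η)⁻¹) ≤ (t ^ η)⁻¹ - 1 :=
    Real.log_le_sub_one_of_pos (by positivity)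
  rw [Real.log_inv, Real.log_rpow ht0] at h1
  have h2 : t ^ (-η) = (t ^ η)⁻¹ := Real.rpow_neg ht0.le η
  rw [h2]
  have h3 : (0:ℝ) < (t ^ η)⁻¹ := by positivity
  have hηi : 0 < η⁻¹ := by positivity
  nlinarith [h1, h3, mul_inv_cancel₀ hη.ne']

lemma betaFun_log_integrableOn {a b : ℝ} (ha : 0 < a) (hb : 0 < b) :
    IntegrableOn (fun t : ℝ => |Real.log t| * (t ^ (a-1) * (1-t) ^ (b-1))) (Set.Ioo 0 1) := by
  have hmeas : Measurable (fun t : ℝ => |Real.log t| * (t ^ (a-1) * (1-t) ^ (b-1))) := by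
    exact (Real.measurable_log.abs).mul ((measurable_id.pow_const _).mul
      ((measurable_const.sub measurable_id).pow_const _))
  refine Integrable.mono' (((betaFun_integrableOn (half_pos ha) hb).const_mul
      (2/a))) hmeas.aestronglyMeasurable ?_
  filter_upwards [ae_restrict_mem measurableSet_Ioo] with t ht
  obtain ⟨ht0, ht1⟩ := ht
  have h1 : |Real.log t| ≤ (a/2)⁻¹ * t ^ (-(a/2)) := abs_log_le_rpow ⟨ht0, ht1⟩ (half_pos ha)
  have hf : (0:ℝ) ≤ t ^ (a-1) * (1-t) ^ (b-1) :=
    mul_nonneg (Real.rpow_nonneg ht0.le _) (Real.rpow_nonneg (by linarith) _)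
  rw [Real.norm_eq_abs, abs_of_nonneg (mul_nonneg (abs_nonneg _) hf)]
  calc |Real.log t| * (t ^ (a-1) * (1-t) ^ (b-1))
      ≤ ((a/2)⁻¹ * t ^ (-(a/2))) * (t ^ (a-1) * (1-t) ^ (b-1)) := by
        exact mul_le_mul_of_nonneg_right h1 hf
    _ = 2/a * (t ^ (a/2-1) * (1-t) ^ (b-1)) := by
        rw [show (2:ℝ)/a = (a/2)⁻¹ from (inv_div a 2).symm]
        rw [mul_assoc, ← mul_assoc (t ^ (-(a/2))), ← Real.rpow_add ht0]
        ring_nf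


lemma hasDerivAt_rpow_exponent {t : ℝ} (ht : 0 < t) (x : ℝ) :
    HasDerivAt (fun y : ℝ => t ^ (y - 1)) (Real.log t * t ^ (x - 1)) x := by
  have h1 : HasDerivAt (fun y : ℝ => t ^ y) (t ^ (x - 1) * Real.log t) (x - 1) :=
    (Real.hasStrictDerivAt_const_rpow ht (x - 1)).hasDerivAt
  have h2 : HasDerivAt (fun y : ℝ => y - 1) 1 x := (hasDerivAt_id x).sub_const 1
  have h3 := HasDerivAt.comp x h1 h2
  simpa [mul_comm, Function.comp_def] using h3

lemma hasDerivAt_betaIntegral {a b : ℝ} (ha : 0 < a) (hb : 0 < b)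
    (hint : IntegrableOn (fun t : ℝ => t ^ (a-1) * (1-t) ^ (b-1)) (Set.Ioo 0 1))
    (hbnd : IntegrableOn (fun t : ℝ => t ^ (a/4-1) * (1-t) ^ (b-1)) (Set.Ioo 0 1)) :
    HasDerivAt (fun a' => ∫ t in Set.Ioo (0:ℝ) 1, t ^ (a'-1) * (1-t) ^ (b-1))
      (∫ t in Set.Ioo (0:ℝ) 1, Real.log t * (t ^ (a-1) * (1-t) ^ (b-1))) a := by
  have hmeas : ∀ c : ℝ, Measurable (fun t : ℝ => t ^ (c-1) * (1-t) ^ (b-1)) := fun c =>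
    (measurable_id.pow_const _).mul ((measurable_const.sub measurable_id).pow_const _)
  have key := hasDerivAt_integral_of_dominated_loc_of_deriv_le
    (μ := volume.restrict (Set.Ioo (0:ℝ) 1)) (x₀ := a)
    (F := fun a' t => t ^ (a'-1) * (1-t) ^ (b-1))
    (F' := fun a' t => Real.log t * (t ^ (a'-1) * (1-t) ^ (b-1)))
    (bound := fun t => 4/a * (t ^ (a/4-1) * (1-t) ^ (b-1)))
    (Metric.ball_mem_nhds a (half_pos ha))
    (Filter.Eventually.of_forall fun c => ((hmeas c).aestronglyMeasurable))
    hint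
    ((Real.measurable_log.mul (hmeas a)).aestronglyMeasurable)
    ?_ (hbnd.const_mul _) ?_
  · exact key.2
  · filter_upwards [ae_restrict_mem measurableSet_Ioo] with t ht x hx
    obtain ⟨ht0, ht1⟩ := ht
    rw [Metric.mem_ball, Real.dist_eq] at hx
    have hx2 : a/2 - 1 ≤ x - 1 := by cases abs_lt.mp hx; linarith
    have h1 : t ^ (x-1) ≤ t ^ (a/2-1) :=
      Real.rpow_le_rpow_of_exponent_ge ht0 ht1.le hx2
    have hlog : |Real.log t| ≤ (a/4)⁻¹ * t ^ (-(a/4)) :=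
      abs_log_le_rpow ⟨ht0, ht1⟩ (by linarith)
    have h1t : (0:ℝ) ≤ (1-t) ^ (b-1) := Real.rpow_nonneg (by linarith) _
    have htp : ∀ y : ℝ, (0:ℝ) ≤ t ^ y := fun y => Real.rpow_nonneg ht0.le _
    rw [Real.norm_eq_abs, abs_mul, abs_of_nonneg (mul_nonneg (htp _) h1t)]
    calc |Real.log t| * (t ^ (x-1) * (1-t) ^ (b-1))
        ≤ ((a/4)⁻¹ * t ^ (-(a/4))) * (t ^ (a/2-1) * (1-t) ^ (b-1)) := by
          apply mul_le_mul hlog (mul_le_mul_of_nonneg_right h1 h1t)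
            (mul_nonneg (htp _) h1t) (by positivity)
      _ = 4/a * (t ^ (a/4-1) * (1-t) ^ (b-1)) := by
          rw [show (4:ℝ)/a = (a/4)⁻¹ from (inv_div a 4).symm, mul_assoc,
            ← mul_assoc (t ^ (-(a/4))), ← Real.rpow_add ht0]
          ring_nf
  · filter_upwards [ae_restrict_mem measurableSet_Ioo] with t ht x _
    exact (hasDerivAt_rpow_exponent ht.1 x).mul_const _ |>.congr_deriv (by ring)


lemma Gamma_ne_neg_nat {a : ℝ} (ha : 0 < a) : ∀ m : ℕ, a ≠ -m := fun m => by
  have : (0:ℝ) ≤ m := Nat.cast_nonneg m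
  intro h; rw [h] at ha; linarith

lemma integral_log_betaFun {a b : ℝ} (ha : 0 < a) (hb : 0 < b) :
    ∫ t in Set.Ioo (0:ℝ) 1, Real.log t * (t ^ (a-1) * (1-t) ^ (b-1))
      = (Real.Gamma a * Real.Gamma b / Real.Gamma (a+b)) * (digamma a - digamma (a+b)) := by
  have hD : HasDerivAt (fun a' => ∫ t in Set.Ioo (0:ℝ) 1, t ^ (a'-1) * (1-t) ^ (b-1))
      (∫ t in Set.Ioo (0:ℝ) 1, Real.log t * (t ^ (a-1) * (1-t) ^ (b-1))) a :=
    hasDerivAt_betaIntegral ha hb (betaFun_integrableOn ha hb)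
      (betaFun_integrableOn (by linarith) hb)
  have hEq : (fun a' => ∫ t in Set.Ioo (0:ℝ) 1, t ^ (a'-1) * (1-t) ^ (b-1))
      =ᶠ[nhds a] (fun a' => Real.Gamma a' * Real.Gamma b / Real.Gamma (a'+b)) := by
    filter_upwards [eventually_gt_nhds ha] with x hx
    exact betaFun_integral hx hb
  have hD2 : HasDerivAt (fun a' => Real.Gamma a' * Real.Gamma b / Real.Gamma (a'+b))
      (∫ t in Set.Ioo (0:ℝ) 1, Real.log t * (t ^ (a-1) * (1-t) ^ (b-1))) a :=
    hD.congr_of_eventuallyEq hEq.symm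
  have hΓa : HasDerivAt Real.Gamma (deriv Real.Gamma a) a :=
    (Real.differentiableAt_Gamma (Gamma_ne_neg_nat ha)).hasDerivAt
  have hΓab : HasDerivAt (fun a' : ℝ => Real.Gamma (a'+b)) (deriv Real.Gamma (a+b)) a := by
    have h1 : HasDerivAt Real.Gamma (deriv Real.Gamma (a+b)) (a+b) :=
      (Real.differentiableAt_Gamma (Gamma_ne_neg_nat (by linarith))).hasDerivAt
    have h2 : HasDerivAt (fun a' : ℝ => a' + b) 1 a := (hasDerivAt_id a).add_const b
    simpa [Function.comp_def] using h1.comp a h2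
  have hGab : Real.Gamma (a+b) ≠ 0 := (Real.Gamma_pos_of_pos (by linarith)).ne'
  have hGa : Real.Gamma a ≠ 0 := (Real.Gamma_pos_of_pos ha).ne'
  have hD3 : HasDerivAt (fun a' => Real.Gamma a' * Real.Gamma b / Real.Gamma (a'+b))
      ((deriv Real.Gamma a * Real.Gamma b * Real.Gamma (a+b)
        - Real.Gamma a * Real.Gamma b * deriv Real.Gamma (a+b)) / (Real.Gamma (a+b))^2) a :=
    (hΓa.mul_const (Real.Gamma b)).div hΓab hGab
  have := hD2.unique hD3
  rw [this, digamma, digamma]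
  field_simp


lemma integral_log_one_sub_betaFun {a b : ℝ} (ha : 0 < a) (hb : 0 < b) :
    ∫ t in Set.Ioo (0:ℝ) 1, Real.log (1-t) * (t ^ (a-1) * (1-t) ^ (b-1))
      = (Real.Gamma a * Real.Gamma b / Real.Gamma (a+b)) * (digamma b - digamma (a+b)) := by
  set g : ℝ → ℝ := fun t => Real.log t * (t ^ (b-1) * (1-t) ^ (a-1)) with hg
  have h1 : ∀ t : ℝ, Real.log (1-t) * (t ^ (a-1) * (1-t) ^ (b-1)) = g (1-t) := by
    intro t; simp only [hg]; ring_nf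
  calc ∫ t in Set.Ioo (0:ℝ) 1, Real.log (1-t) * (t ^ (a-1) * (1-t) ^ (b-1))
      = ∫ t in Set.Ioo (0:ℝ) 1, g (1-t) := by
        exact setIntegral_congr_fun measurableSet_Ioo (fun t _ => h1 t)
    _ = ∫ t in (0:ℝ)..1, g (1-t) := by
        rw [intervalIntegral.integral_of_le (by norm_num : (0:ℝ) ≤ 1),
          MeasureTheory.integral_Ioc_eq_integral_Ioo]
    _ = ∫ t in (0:ℝ)..1, g t := by
        simpa using intervalIntegral.integral_comp_sub_left (a := (0:ℝ)) (b := 1) g 1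
    _ = ∫ t in Set.Ioo (0:ℝ) 1, g t := by
        rw [intervalIntegral.integral_of_le (by norm_num : (0:ℝ) ≤ 1),
          MeasureTheory.integral_Ioc_eq_integral_Ioo]
    _ = (Real.Gamma a * Real.Gamma b / Real.Gamma (a+b)) * (digamma b - digamma (a+b)) := by
        rw [hg, integral_log_betaFun hb ha]
        rw [add_comm b a, mul_comm (Real.Gamma b)]


lemma sqrt_mul_sqrt_le_half {c d : ℝ} (hc : 0 ≤ c) (hd : 0 ≤ d) :
    Real.sqrt c * Real.sqrt d ≤ (c + d) / 2 := by
  nlinarith [sq_nonneg (Real.sqrt c - Real.sqrt d), Real.sq_sqrt hc, Real.sq_sqrt hd,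
    Real.sqrt_nonneg c, Real.sqrt_nonneg d]

lemma sqrt_mul_sqrt_le_lam {c d l : ℝ} (hc : 0 ≤ c) (hd : 0 ≤ d) (hl : 0 < l) :
    Real.sqrt c * Real.sqrt d ≤ (l * c + d / l) / 2 := by
  have h1 : Real.sqrt (l * c) * Real.sqrt (d / l) ≤ (l * c + d / l) / 2 :=
    sqrt_mul_sqrt_le_half (by positivity) (by positivity)
  have h2 : Real.sqrt (l * c) * Real.sqrt (d / l) = Real.sqrt c * Real.sqrt d := by
    rw [Real.sqrt_mul hl.le, Real.sqrt_div hd]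
    have hsl : Real.sqrt l ≠ 0 := by positivity
    field_simp
  rw [← h2]; exact h1

lemma integral_sqrt_mul_sqrt_le {μ : Measure ℝ} (u v : ℝ → ℝ)
    (hu : Integrable u μ) (hv : Integrable v μ)
    (hu0 : 0 ≤ᵐ[μ] u) (hv0 : 0 ≤ᵐ[μ] v)
    (hm : AEStronglyMeasurable (fun t => Real.sqrt (u t) * Real.sqrt (v t)) μ) :
    ∫ t, Real.sqrt (u t) * Real.sqrt (v t) ∂μ
      ≤ Real.sqrt (∫ t, u t ∂μ) * Real.sqrt (∫ t, v t ∂μ) := by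
  set U := ∫ t, u t ∂μ
  set V := ∫ t, v t ∂μ
  have hU : 0 ≤ U := integral_nonneg_of_ae hu0
  have hV : 0 ≤ V := integral_nonneg_of_ae hv0
  have hint : Integrable (fun t => Real.sqrt (u t) * Real.sqrt (v t)) μ := by
    refine Integrable.mono' ((hu.add hv).div_const 2) hm ?_
    filter_upwards [hu0, hv0] with t h1 h2
    rw [Real.norm_eq_abs, abs_of_nonneg (by positivity)]
    exact sqrt_mul_sqrt_le_half h1 h2
  have key : ∀ l : ℝ, 0 < l →
      ∫ t, Real.sqrt (u t) * Real.sqrt (v t) ∂μ ≤ (l * U + V / l) / 2 := by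
    intro l hl
    have hb : Integrable (fun t => (l * u t + v t / l) / 2) μ :=
      ((hu.const_mul l).add (hv.div_const l)).div_const 2
    have := integral_mono_ae hint hb ?_
    · calc ∫ t, Real.sqrt (u t) * Real.sqrt (v t) ∂μ
          ≤ ∫ t, (l * u t + v t / l) / 2 ∂μ := this
        _ = (l * U + V / l) / 2 := by
            rw [integral_div, integral_add (hu.const_mul l) (hv.div_const l),
              integral_const_mul, integral_div]
    · filter_upwards [hu0, hv0] with t h1 h2
      exact sqrt_mul_sqrt_le_lam h1 h2 hl
  -- now take l = sqrt (V+ε) / sqrt (U+ε) and let ε → 0⁺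
  have keps : ∀ ε : ℝ, 0 < ε →
      ∫ t, Real.sqrt (u t) * Real.sqrt (v t) ∂μ ≤ Real.sqrt (U + ε) * Real.sqrt (V + ε) := by
    intro ε hε
    have hUε : 0 < U + ε := by linarith
    have hVε : 0 < V + ε := by linarith
    set l := Real.sqrt (V + ε) / Real.sqrt (U + ε) with hldef
    have hl : 0 < l := by positivity
    refine (key l hl).trans ?_
    have e1 : l * (U + ε) = Real.sqrt (V + ε) * Real.sqrt (U + ε) := by
      rw [hldef, div_mul_eq_mul_div, mul_div_assoc, Real.div_sqrt]
    have e2 : (V + ε) / l = Real.sqrt (V + ε) * Real.sqrt (U + ε) := by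
      rw [hldef, div_div_eq_mul_div, mul_comm, mul_div_assoc, Real.div_sqrt, mul_comm]
    have h3 : l * U ≤ l * (U + ε) := by nlinarith
    have h4 : V / l ≤ (V + ε) / l := by gcongr <;> linarith [hl]
    calc (l * U + V / l) / 2 ≤ (l * (U + ε) + (V + ε) / l) / 2 := by linarith
      _ = Real.sqrt (U + ε) * Real.sqrt (V + ε) := by rw [e1, e2]; ring
  have htend : Filter.Tendsto (fun ε : ℝ => Real.sqrt (U + ε) * Real.sqrt (V + ε))
      (nhdsWithin 0 (Set.Ioi 0)) (nhds (Real.sqrt U * Real.sqrt V)) := by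
    have : Filter.Tendsto (fun ε : ℝ => Real.sqrt (U + ε) * Real.sqrt (V + ε))
        (nhds 0) (nhds (Real.sqrt (U + 0) * Real.sqrt (V + 0))) := by
      exact (((continuous_const.add continuous_id).sqrt).mul
        ((continuous_const.add continuous_id).sqrt)).tendsto 0
    simpa using this.mono_left nhdsWithin_le_nhds
  refine ge_of_tendsto htend ?_
  filter_upwards [self_mem_nhdsWithin] with ε (hε : ε ∈ Set.Ioi 0)
  exact keps ε hε


lemma aux_sq_le {x y : ℝ} (hx : 0 < x) (hy : 0 < y) (h : y ≤ x) :
    (x - y)^2 ≤ ((x - y) * (Real.log x - Real.log y)) * (x + y) := by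
  have hL : 0 ≤ Real.log x - Real.log y := by
    have := Real.log_le_log hy h; linarith
  have hl : Real.log y - Real.log x ≤ y / x - 1 := by
    have := Real.log_le_sub_one_of_pos (div_pos hy hx)
    rwa [Real.log_div hy.ne' hx.ne'] at this
  have h2 : x - y ≤ (Real.log x - Real.log y) * x := by
    have h3 : 1 - y / x ≤ Real.log x - Real.log y := by linarith
    calc x - y = (1 - y / x) * x := by field_simp
      _ ≤ (Real.log x - Real.log y) * x := by nlinarith
  have hxy : 0 ≤ x - y := sub_nonneg.mpr h
  nlinarith [mul_le_mul_of_nonneg_left h2 hxy, mul_nonneg (mul_nonneg hxy hL) hy.le]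

lemma log_sign_nonneg {x y : ℝ} (hx : 0 < x) (hy : 0 < y) :
    0 ≤ (x - y) * (Real.log x - Real.log y) := by
  rcases le_total y x with h | h
  · exact mul_nonneg (by linarith) (by linarith [Real.log_le_log hy h])
  · have h1 : x - y ≤ 0 := by linarith
    have h2 : Real.log x - Real.log y ≤ 0 := by linarith [Real.log_le_log hx h]
    nlinarith

lemma pointwise_tv_bound {x y : ℝ} (hx : 0 < x) (hy : 0 < y) :
    |x - y| ≤ Real.sqrt ((x - y) * (Real.log x - Real.log y)) * Real.sqrt (x + y) := by
  have hkey : (x - y)^2 ≤ ((x - y) * (Real.log x - Real.log y)) * (x + y) := by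
    rcases le_total y x with h | h
    · exact aux_sq_le hx hy h
    · calc (x - y)^2 = (y - x)^2 := by ring
        _ ≤ ((y - x) * (Real.log y - Real.log x)) * (y + x) := aux_sq_le hy hx h
        _ = ((x - y) * (Real.log x - Real.log y)) * (x + y) := by ring
  rw [← Real.sqrt_sq_eq_abs]
  refine (Real.sqrt_le_sqrt hkey).trans ?_
  rw [Real.sqrt_mul (log_sign_nonneg hx hy)]


lemma betaFun_log1sub_integrableOn {a b : ℝ} (ha : 0 < a) (hb : 0 < b) :
    IntegrableOn (fun t : ℝ => |Real.log (1-t)| * (t ^ (a-1) * (1-t) ^ (b-1)))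
      (Set.Ioo 0 1) := by
  have hmeas : Measurable (fun t : ℝ => |Real.log (1-t)| * (t ^ (a-1) * (1-t) ^ (b-1))) := by
    exact ((Real.measurable_log.comp (measurable_const.sub measurable_id)).abs).mul
      ((measurable_id.pow_const _).mul ((measurable_const.sub measurable_id).pow_const _))
  refine Integrable.mono' (((betaFun_integrableOn ha (half_pos hb)).const_mul
      (2/b))) hmeas.aestronglyMeasurable ?_
  filter_upwards [ae_restrict_mem measurableSet_Ioo] with t ht
  obtain ⟨ht0, ht1⟩ := ht
  have h1s : (1-t) ∈ Set.Ioo (0:ℝ) 1 := ⟨by linarith, by linarith⟩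
  have h1 : |Real.log (1-t)| ≤ (b/2)⁻¹ * (1-t) ^ (-(b/2)) := abs_log_le_rpow h1s (half_pos hb)
  have hf : (0:ℝ) ≤ t ^ (a-1) * (1-t) ^ (b-1) :=
    mul_nonneg (Real.rpow_nonneg ht0.le _) (Real.rpow_nonneg (by linarith) _)
  rw [Real.norm_eq_abs, abs_of_nonneg (mul_nonneg (abs_nonneg _) hf)]
  calc |Real.log (1-t)| * (t ^ (a-1) * (1-t) ^ (b-1))
      ≤ ((b/2)⁻¹ * (1-t) ^ (-(b/2))) * (t ^ (a-1) * (1-t) ^ (b-1)) :=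
        mul_le_mul_of_nonneg_right h1 hf
    _ = 2/b * (t ^ (a-1) * (1-t) ^ (b/2-1)) := by
        rw [show (2:ℝ)/b = (b/2)⁻¹ from (inv_div b 2).symm, mul_assoc]
        rw [show (1-t) ^ (-(b/2)) * (t ^ (a-1) * (1-t) ^ (b-1))
            = t ^ (a-1) * ((1-t) ^ (-(b/2)) * (1-t) ^ (b-1)) by ring,
          ← Real.rpow_add h1s.1]
        ring_nf

section BetaPdfLemmas

variable {a b : ℝ}

lemma betaB_pos (ha : 0 < a) (hb : 0 < b) :
    0 < Real.Gamma a * Real.Gamma b / Real.Gamma (a+b) :=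
  div_pos (mul_pos (Real.Gamma_pos_of_pos ha) (Real.Gamma_pos_of_pos hb))
    (Real.Gamma_pos_of_pos (by linarith))

lemma betaPdf_pos (ha : 0 < a) (hb : 0 < b) {t : ℝ} (ht : t ∈ Set.Ioo (0:ℝ) 1) :
    0 < betaPdf a b t :=
  div_pos (mul_pos (Real.rpow_pos_of_pos ht.1 _)
    (Real.rpow_pos_of_pos (by linarith [ht.2]) _)) (betaB_pos ha hb)

lemma betaPdf_integrableOn (ha : 0 < a) (hb : 0 < b) :
    IntegrableOn (betaPdf a b) (Set.Ioo 0 1) := by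
  have := (betaFun_integrableOn ha hb).div_const (Real.Gamma a * Real.Gamma b / Real.Gamma (a+b))
  exact this

lemma betaPdf_integral (ha : 0 < a) (hb : 0 < b) :
    ∫ t in Set.Ioo (0:ℝ) 1, betaPdf a b t = 1 := by
  simp only [betaPdf]
  rw [integral_div, betaFun_integral ha hb, div_self (betaB_pos ha hb).ne']

lemma betaPdf_measurable : Measurable (betaPdf a b) :=
  ((measurable_id.pow_const _).mul ((measurable_const.sub measurable_id).pow_const _)).div
    measurable_const

lemma betaPdf_logmul_int (ha : 0 < a) (hb : 0 < b) :
    IntegrableOn (fun t => Real.log t * betaPdf a b t) (Set.Ioo 0 1) := by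
  refine Integrable.mono' ((betaFun_log_integrableOn ha hb).div_const
      (Real.Gamma a * Real.Gamma b / Real.Gamma (a+b)))
    (Real.measurable_log.mul betaPdf_measurable).aestronglyMeasurable ?_
  filter_upwards [ae_restrict_mem measurableSet_Ioo] with t ht
  have hp := (betaPdf_pos ha hb ht).le
  rw [Real.norm_eq_abs, abs_mul, abs_of_nonneg hp]
  apply le_of_eq
  simp only [betaPdf, mul_div_assoc]

lemma betaPdf_log1sub_int (ha : 0 < a) (hb : 0 < b) :
    IntegrableOn (fun t => Real.log (1-t) * betaPdf a b t) (Set.Ioo 0 1) := by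
  refine Integrable.mono' ((betaFun_log1sub_integrableOn ha hb).div_const
      (Real.Gamma a * Real.Gamma b / Real.Gamma (a+b)))
    ((Real.measurable_log.comp (measurable_const.sub measurable_id)).mul
      betaPdf_measurable).aestronglyMeasurable ?_
  filter_upwards [ae_restrict_mem measurableSet_Ioo] with t ht
  have hp := (betaPdf_pos ha hb ht).le
  rw [Real.norm_eq_abs, abs_mul, abs_of_nonneg hp]
  apply le_of_eq
  simp only [betaPdf, mul_div_assoc]

lemma betaPdf_logmul_eq (ha : 0 < a) (hb : 0 < b) :
    ∫ t in Set.Ioo (0:ℝ) 1, Real.log t * betaPdf a b t = digamma a - digamma (a+b) := by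
  simp only [betaPdf, mul_div_assoc']
  rw [integral_div, integral_log_betaFun ha hb]
  have hB := (betaB_pos ha hb).ne'
  field_simp

lemma betaPdf_log1sub_eq (ha : 0 < a) (hb : 0 < b) :
    ∫ t in Set.Ioo (0:ℝ) 1, Real.log (1-t) * betaPdf a b t = digamma b - digamma (a+b) := by
  simp only [betaPdf, mul_div_assoc']
  rw [integral_div, integral_log_one_sub_betaFun ha hb]
  have hB := (betaB_pos ha hb).ne'
  field_simp

end BetaPdfLemmas


/-- Proposition 2 (true-label-confidence disclosure). -/
theorem stmt10 (epsE Δ epsA : ℝ)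
    (hεe : 0 < epsE) (hΔ : 0 ≤ Δ) (hεa₁ : Δ / (1 + Δ) < epsA) (hεa₂ : epsA < 1)
    (A : Set ℝ) (hA : MeasurableSet A) (hA' : A ⊆ Set.Ioo 0 1) :
    (∫ t in A, betaPdf ((1 - epsA) / epsE) (epsA / epsE) t)
      - (∫ t in A, betaPdf ((1 + Δ) * (1 - epsA) / epsE) ((epsA * (1 + Δ) - Δ) / epsE) t)
      ≤ Real.sqrt ((Δ * (1 - epsA) / epsE) *
          (digamma ((1 + Δ) * (1 - epsA) / epsE) - digamma ((1 - epsA) / epsE)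
            + digamma (epsA / epsE) - digamma ((epsA * (1 + Δ) - Δ) / epsE))) := by

  have h1Δ : (0:ℝ) < 1 + Δ := by linarith
  have hεa0 : 0 < epsA := lt_of_le_of_lt (by positivity) hεa₁
  have hΔlt : Δ < epsA * (1 + Δ) := by
    have := (div_lt_iff₀ h1Δ).mp hεa₁; linarith
  set a2 := (1 - epsA) / epsE with ha2def
  set b2 := epsA / epsE with hb2def
  set a1 := (1 + Δ) * (1 - epsA) / epsE with ha1def
  set b1 := (epsA * (1 + Δ) - Δ) / epsE with hb1def
  set c := Δ * (1 - epsA) / epsE with hcdef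
  have ha2 : 0 < a2 := div_pos (by linarith) hεe
  have hb2 : 0 < b2 := div_pos hεa0 hεe
  have ha1 : 0 < a1 := div_pos (by nlinarith) hεe
  have hb1 : 0 < b1 := div_pos (by linarith) hεe
  have hc : 0 ≤ c := div_nonneg (by nlinarith) hεe.le
  have hsum : a1 + b1 = a2 + b2 := by
    rw [ha1def, hb1def, ha2def, hb2def, ← add_div, ← add_div]
    congr 1; ring
  have ha1c : a1 = a2 + c := by
    rw [ha1def, ha2def, hcdef, ← add_div]; congr 1; ring
  have hb1c : b1 = b2 - c := by
    rw [hb1def, hb2def, hcdef, div_sub_div_same]; congr 1; ring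
  set p := betaPdf a2 b2 with hpdef
  set q := betaPdf a1 b1 with hqdef
  have hpInt : IntegrableOn p (Set.Ioo 0 1) := betaPdf_integrableOn ha2 hb2
  have hqInt : IntegrableOn q (Set.Ioo 0 1) := betaPdf_integrableOn ha1 hb1
  have hpA : IntegrableOn p A := hpInt.mono_set hA'
  have hqA : IntegrableOn q A := hqInt.mono_set hA'
  set K := Real.log (Real.Gamma a1 * Real.Gamma b1 / Real.Gamma (a1+b1))
      - Real.log (Real.Gamma a2 * Real.Gamma b2 / Real.Gamma (a2+b2)) with hKdef
  have hlogdiff : ∀ t ∈ Set.Ioo (0:ℝ) 1, Real.log (p t) - Real.log (q t)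
      = -c * Real.log t + c * Real.log (1-t) + K := by
    intro t ht
    obtain ⟨ht0, ht1⟩ := ht
    have h1t : (0:ℝ) < 1 - t := by linarith
    have hfp : ∀ x y : ℝ, 0 < x → 0 < y → Real.log (betaPdf x y t)
        = (x-1) * Real.log t + (y-1) * Real.log (1-t)
          - Real.log (Real.Gamma x * Real.Gamma y / Real.Gamma (x+y)) := by
      intro x y hx hy
      rw [betaPdf, Real.log_div (mul_pos (Real.rpow_pos_of_pos ht0 _)
          (Real.rpow_pos_of_pos h1t _)).ne' (betaB_pos hx hy).ne',
        Real.log_mul (Real.rpow_pos_of_pos ht0 _).ne' (Real.rpow_pos_of_pos h1t _).ne',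
        Real.log_rpow ht0, Real.log_rpow h1t]
    rw [hpdef, hqdef, hfp a2 b2 ha2 hb2, hfp a1 b1 ha1 hb1, hKdef, ha1c, hb1c]
    ring
  set u : ℝ → ℝ := fun t => (p t - q t) * (Real.log (p t) - Real.log (q t)) with hudef
  set v : ℝ → ℝ := fun t => p t + q t with hvdef
  have huexp : ∀ t ∈ Set.Ioo (0:ℝ) 1, u t
      = (-c) * (Real.log t * p t) + c * (Real.log t * q t) + c * (Real.log (1-t) * p t)
        + (-c) * (Real.log (1-t) * q t) + K * p t + (-K) * q t := by
    intro t ht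
    rw [hudef]
    simp only
    rw [hlogdiff t ht]
    ring
  have I₁ := (betaPdf_logmul_int ha2 hb2).const_mul (-c)
  have I₂ := (betaPdf_logmul_int ha1 hb1).const_mul c
  have I₃ := (betaPdf_log1sub_int ha2 hb2).const_mul c
  have I₄ := (betaPdf_log1sub_int ha1 hb1).const_mul (-c)
  have I₅ := hpInt.const_mul K
  have I₆ := hqInt.const_mul (-K)
  have I₁₂ : Integrable (fun t : ℝ => (-c) * (Real.log t * p t) + c * (Real.log t * q t))
      (volume.restrict (Set.Ioo 0 1)) := I₁.add I₂
  have I₁₃ : Integrable (fun t : ℝ => (-c) * (Real.log t * p t) + c * (Real.log t * q t)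
      + c * (Real.log (1-t) * p t)) (volume.restrict (Set.Ioo 0 1)) := I₁₂.add I₃
  have I₁₄ : Integrable (fun t : ℝ => (-c) * (Real.log t * p t) + c * (Real.log t * q t)
      + c * (Real.log (1-t) * p t) + (-c) * (Real.log (1-t) * q t))
      (volume.restrict (Set.Ioo 0 1)) := I₁₃.add I₄
  have I₁₅ : Integrable (fun t : ℝ => (-c) * (Real.log t * p t) + c * (Real.log t * q t)
      + c * (Real.log (1-t) * p t) + (-c) * (Real.log (1-t) * q t) + K * p t)
      (volume.restrict (Set.Ioo 0 1)) := I₁₄.add I₅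
  have hsumInt : IntegrableOn (fun t => (-c) * (Real.log t * p t) + c * (Real.log t * q t)
      + c * (Real.log (1-t) * p t) + (-c) * (Real.log (1-t) * q t) + K * p t + (-K) * q t)
      (Set.Ioo 0 1) := I₁₅.add I₆
  have huInt : IntegrableOn u (Set.Ioo 0 1) :=
    hsumInt.congr_fun (fun t ht => (huexp t ht).symm) measurableSet_Ioo
  have hJval : ∫ t in Set.Ioo (0:ℝ) 1, u t
      = c * (digamma a1 - digamma a2 + digamma b2 - digamma b1) := by
    rw [setIntegral_congr_fun measurableSet_Ioo huexp,
      integral_add I₁₅ I₆, integral_add I₁₄ I₅, integral_add I₁₃ I₄,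
      integral_add I₁₂ I₃, integral_add I₁ I₂]
    simp only [integral_const_mul]
    rw [hpdef, hqdef, betaPdf_logmul_eq ha2 hb2, betaPdf_logmul_eq ha1 hb1,
      betaPdf_log1sub_eq ha2 hb2, betaPdf_log1sub_eq ha1 hb1,
      betaPdf_integral ha2 hb2, betaPdf_integral ha1 hb1, hsum]
    ring
  have hu0 : ∀ t ∈ Set.Ioo (0:ℝ) 1, 0 ≤ u t := fun t ht =>
    log_sign_nonneg (betaPdf_pos ha2 hb2 ht) (betaPdf_pos ha1 hb1 ht)
  have hv0 : ∀ t ∈ Set.Ioo (0:ℝ) 1, 0 ≤ v t := fun t ht =>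
    add_nonneg (betaPdf_pos ha2 hb2 ht).le (betaPdf_pos ha1 hb1 ht).le
  have hvInt : IntegrableOn v (Set.Ioo 0 1) := hpInt.add hqInt
  have hvval : ∫ t in Set.Ioo (0:ℝ) 1, v t = 2 := by
    rw [hvdef]
    rw [integral_add hpInt hqInt, hpdef, hqdef, betaPdf_integral ha2 hb2,
      betaPdf_integral ha1 hb1]
    norm_num
  have hpm : Measurable p := hpdef ▸ betaPdf_measurable
  have hqm : Measurable q := hqdef ▸ betaPdf_measurable
  have hum : Measurable u := (hpm.sub hqm).mul
    ((Real.measurable_log.comp hpm).sub (Real.measurable_log.comp hqm))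
  have hvm : Measurable v := hpm.add hqm
  have hsqm : AEStronglyMeasurable (fun t => Real.sqrt (u t) * Real.sqrt (v t))
      (volume.restrict (Set.Ioo 0 1)) :=
    ((Real.continuous_sqrt.measurable.comp hum).mul
      (Real.continuous_sqrt.measurable.comp hvm)).aestronglyMeasurable
  have hu0ae : 0 ≤ᵐ[volume.restrict (Set.Ioo 0 1)] u := by
    filter_upwards [ae_restrict_mem measurableSet_Ioo] with t ht; exact hu0 t ht
  have hv0ae : 0 ≤ᵐ[volume.restrict (Set.Ioo 0 1)] v := by
    filter_upwards [ae_restrict_mem measurableSet_Ioo] with t ht; exact hv0 t ht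
  have hsuvInt : IntegrableOn (fun t => Real.sqrt (u t) * Real.sqrt (v t)) (Set.Ioo 0 1) := by
    refine Integrable.mono' ((huInt.add hvInt).div_const 2) hsqm ?_
    filter_upwards [hu0ae, hv0ae] with t h1 h2
    rw [Real.norm_eq_abs, abs_of_nonneg (mul_nonneg (Real.sqrt_nonneg _) (Real.sqrt_nonneg _))]
    exact sqrt_mul_sqrt_le_half h1 h2
  have hpq : Integrable (fun t => p t - q t) (volume.restrict (Set.Ioo 0 1)) :=
    hpInt.sub hqInt
  have hpqa : Integrable (fun t => |p t - q t|) (volume.restrict (Set.Ioo 0 1)) := hpq.abs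
  have hCS := integral_sqrt_mul_sqrt_le u v huInt hvInt hu0ae hv0ae hsqm
  have habs : ∫ t in Set.Ioo (0:ℝ) 1, |p t - q t|
      ≤ ∫ t in Set.Ioo (0:ℝ) 1, Real.sqrt (u t) * Real.sqrt (v t) := by
    refine setIntegral_mono_on (hpqa) hsuvInt measurableSet_Ioo ?_
    intro t ht
    exact pointwise_tv_bound (betaPdf_pos ha2 hb2 ht) (betaPdf_pos ha1 hb1 ht)
  have hdiff0 : ∫ t in Set.Ioo (0:ℝ) 1, (p t - q t) = 0 := by
    rw [integral_sub hpInt hqInt, hpdef, hqdef, betaPdf_integral ha2 hb2,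
      betaPdf_integral ha1 hb1]
    ring
  have step1 : ∫ t in A, (p t - q t) ≤ (∫ t in Set.Ioo (0:ℝ) 1, |p t - q t|)/2 := by
    have h1 : ∫ t in A, (p t - q t)
        = ∫ t in Set.Ioo (0:ℝ) 1, A.indicator (fun s => p s - q s) t := by
      rw [setIntegral_indicator hA, Set.inter_eq_right.mpr hA']
    rw [h1]
    have h2 : ∫ t in Set.Ioo (0:ℝ) 1, A.indicator (fun s => p s - q s) t
        ≤ ∫ t in Set.Ioo (0:ℝ) 1, ((p t - q t) + |p t - q t|)/2 := by
      refine setIntegral_mono_on (hpq.indicator hA)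
        ((hpq.add hpqa).div_const 2) measurableSet_Ioo ?_
      intro t ht
      by_cases htA : t ∈ A
      · rw [Set.indicator_of_mem htA]
        have := le_abs_self (p t - q t); linarith
      · rw [Set.indicator_of_notMem htA]
        have := neg_abs_le (p t - q t); linarith
    have h3 : ∫ t in Set.Ioo (0:ℝ) 1, ((p t - q t) + |p t - q t|)/2
        = (∫ t in Set.Ioo (0:ℝ) 1, |p t - q t|)/2 := by
      rw [integral_div, integral_add hpq hpqa, hdiff0, zero_add]
    rw [h3] at h2
    exact h2
  have hs2 : Real.sqrt 2 ≤ 2 := by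
    nlinarith [Real.sq_sqrt (show (0:ℝ) ≤ 2 by norm_num), Real.sqrt_nonneg 2]
  calc (∫ t in A, p t) - (∫ t in A, q t)
      = ∫ t in A, (p t - q t) := (integral_sub hpA hqA).symm
    _ ≤ (∫ t in Set.Ioo (0:ℝ) 1, |p t - q t|)/2 := step1
    _ ≤ (Real.sqrt (∫ t in Set.Ioo (0:ℝ) 1, u t)
          * Real.sqrt (∫ t in Set.Ioo (0:ℝ) 1, v t))/2 := by linarith [habs, hCS]
    _ = Real.sqrt (c * (digamma a1 - digamma a2 + digamma b2 - digamma b1))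
          * Real.sqrt 2 / 2 := by rw [hJval, hvval]
    _ ≤ Real.sqrt (c * (digamma a1 - digamma a2 + digamma b2 - digamma b1)) := by
        nlinarith [Real.sqrt_nonneg (c * (digamma a1 - digamma a2 + digamma b2 - digamma b1)),
          hs2]
end

section
/- (Strong data processing inequality with Dobrushin coefficient.) Let (X, 𝓐) be a measurable space, Y a finite nonempty set, and κ : X → (probability mass functions on Y) a Markov kernel, i.e., x ↦ κ(x)(y) is measurable for every y ∈ Y and Σ_{y} κ(x)(y) = 1 for every x. Let μ, ν be probability measures on X with μ absolutely continuous with respect to ν and D(μ‖ν) < ∞. Define the output distributions (μκ)(y) = ∫_X κ(x)(y) dμ(x) and (νκ)(y) = ∫_X κ(x)(y) dν(x), and the Dobrushin coefficient η = sup_{x, x' ∈ X} (1/2) Σ_{y ∈ Y} |κ(x)(y) − κ(x')(y)|. Then Σ_{y ∈ Y} (μκ)(y) · log( (μκ)(y) / (νκ)(y) ) ≤ η · D(μ‖ν), with the convention that terms with (μκ)(y) = 0 are 0. -/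
open MeasureTheory Set
open scoped Real Interval


noncomputable def Gfun (t : ℝ) (γ : ℝ) : ℝ := max (t - γ) 0 / γ + max (1 - γ * t) 0 / γ ^ 2

lemma Gfun_nonneg {t γ : ℝ} (hγ : 0 < γ) : 0 ≤ Gfun t γ := by
  unfold Gfun
  positivity

lemma Gfun_meas (t : ℝ) : Measurable (Gfun t) := by
  unfold Gfun
  exact (((measurable_const.sub measurable_id).max measurable_const).div measurable_id).add
    (((measurable_const.sub (measurable_id.mul_const t)).max measurable_const).div
      (measurable_id.pow_const 2))

lemma Gfun_intOn (t : ℝ) (ht : 0 ≤ t) : IntegrableOn (Gfun t) (Ioi 1) := by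
  have hmaj : IntegrableOn (fun γ : ℝ => (t ^ 2 + 1) * γ ^ (-2 : ℝ)) (Ioi 1) :=
    (integrableOn_Ioi_rpow_of_lt (by norm_num) one_pos).const_mul _
  refine Integrable.mono' hmaj ((Gfun_meas t).aestronglyMeasurable) ?_
  rw [ae_restrict_iff' measurableSet_Ioi]
  filter_upwards with γ hγ
  have hγ1 : (1:ℝ) < γ := hγ
  have hγ0 : (0:ℝ) < γ := by linarith
  have hrw : γ ^ (-2 : ℝ) = (γ ^ 2)⁻¹ := by
    rw [Real.rpow_neg hγ0.le, ← Real.rpow_natCast γ 2]; norm_num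
  rw [Real.norm_eq_abs, abs_of_nonneg (Gfun_nonneg hγ0), hrw]
  unfold Gfun
  have h1 : max (t - γ) 0 / γ ≤ t ^ 2 * (γ ^ 2)⁻¹ := by
    rcases le_or_gt t γ with h | h
    · rw [max_eq_right (by linarith), zero_div]
      positivity
    · rw [max_eq_left (by linarith)]
      rw [div_le_iff₀ hγ0]
      have expand : t ^ 2 * (γ ^ 2)⁻¹ * γ = t ^ 2 / γ := by field_simp
      rw [expand, le_div_iff₀ hγ0]
      nlinarith
  have h2 : max (1 - γ * t) 0 / γ ^ 2 ≤ 1 * (γ ^ 2)⁻¹ := by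
    have : max (1 - γ * t) 0 ≤ 1 := by
      rcases le_or_gt (1 - γ * t) 0 with h | h
      · rw [max_eq_right h]; norm_num
      · rw [max_eq_left h.le]; nlinarith
    rw [div_le_iff₀ (by positivity), one_mul]
    calc max (1 - γ * t) 0 ≤ 1 := this
    _ = (γ ^ 2)⁻¹ * γ ^ 2 := by field_simp
  calc max (t - γ) 0 / γ + max (1 - γ * t) 0 / γ ^ 2
      ≤ t ^ 2 * (γ ^ 2)⁻¹ + 1 * (γ ^ 2)⁻¹ := add_le_add h1 h2
    _ = (t ^ 2 + 1) * (γ ^ 2)⁻¹ := by ring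

lemma Gfun_integral (t : ℝ) (ht : 0 ≤ t) :
    ∫ γ in Ioi (1:ℝ), Gfun t γ = t * Real.log t - t + 1 := by
  rcases eq_or_lt_of_le ht with h0 | h0
  · -- t = 0
    rw [← h0]
    have : ∫ γ in Ioi (1:ℝ), Gfun 0 γ = ∫ γ in Ioi (1:ℝ), γ ^ (-2:ℝ) := by
      refine setIntegral_congr_fun measurableSet_Ioi fun γ hγ => ?_
      have hγ1 : (1:ℝ) < γ := hγ
      have hγ0 : (0:ℝ) < γ := by linarith
      unfold Gfun
      rw [max_eq_right (by linarith), mul_zero, sub_zero, max_eq_left one_pos.le, zero_div,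
        zero_add, Real.rpow_neg hγ0.le, ← Real.rpow_natCast γ 2]
      norm_num
    rw [this, integral_Ioi_rpow_of_lt (by norm_num) one_pos]
    norm_num
  rcases le_or_gt 1 t with h1t | ht1
  · -- t ≥ 1
    have hsub1 : Ioc (1:ℝ) t ⊆ Ioi 1 := Ioc_subset_Ioi_self
    have hsub2 : Ioi t ⊆ Ioi (1:ℝ) := Ioi_subset_Ioi h1t
    rw [← Ioc_union_Ioi_eq_Ioi h1t,
      setIntegral_union (Ioc_disjoint_Ioi le_rfl) measurableSet_Ioi
        ((Gfun_intOn t ht).mono_set hsub1) ((Gfun_intOn t ht).mono_set hsub2)]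
    have e2 : ∫ γ in Ioi t, Gfun t γ = 0 := by
      rw [setIntegral_congr_fun measurableSet_Ioi (g := fun _ => (0:ℝ)) ?_, integral_zero]
      intro γ hγ
      have hγt : t < γ := hγ
      have hγ0 : (0:ℝ) < γ := by linarith
      unfold Gfun
      rw [max_eq_right (by linarith), max_eq_right (by nlinarith), zero_div, zero_div, add_zero]
    have h0uIcc : (0:ℝ) ∉ [[(1:ℝ), t]] := Set.notMem_uIcc_of_lt one_pos h0
    have e1 : ∫ γ in Ioc 1 t, Gfun t γ = t * Real.log t - (t - 1) := by
      have heq : EqOn (Gfun t) (fun γ => t * (1/γ) - 1) (Ioc 1 t) := by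
        intro γ hγ
        obtain ⟨hγ1, hγt⟩ := hγ
        have hγ0 : (0:ℝ) < γ := by linarith
        unfold Gfun
        rw [max_eq_left (by linarith), max_eq_right (by nlinarith), zero_div, add_zero]
        field_simp
      rw [setIntegral_congr_fun measurableSet_Ioc heq, ← intervalIntegral.integral_of_le h1t,
        intervalIntegral.integral_sub
          ((intervalIntegral.intervalIntegrable_one_div (fun x hx h => by rw [h] at hx; exact h0uIcc hx)
            (by fun_prop)).const_mul t)
          intervalIntegrable_const,
        intervalIntegral.integral_const_mul, integral_one_div h0uIcc,
        intervalIntegral.integral_const]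
      rw [div_one]
      norm_num
    rw [e1, e2]; ring
  · -- 0 < t < 1
    have hu1 : 1 ≤ t⁻¹ := one_le_inv_iff₀.2 ⟨h0, ht1.le⟩
    have h0uIcc : (0:ℝ) ∉ [[(1:ℝ), t⁻¹]] := Set.notMem_uIcc_of_lt one_pos (inv_pos.2 h0)
    have hsub1 : Ioc (1:ℝ) t⁻¹ ⊆ Ioi 1 := Ioc_subset_Ioi_self
    have hsub2 : Ioi t⁻¹ ⊆ Ioi (1:ℝ) := Ioi_subset_Ioi hu1
    rw [← Ioc_union_Ioi_eq_Ioi hu1,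
      setIntegral_union (Ioc_disjoint_Ioi le_rfl) measurableSet_Ioi
        ((Gfun_intOn t ht).mono_set hsub1) ((Gfun_intOn t ht).mono_set hsub2)]
    have e2 : ∫ γ in Ioi t⁻¹, Gfun t γ = 0 := by
      rw [setIntegral_congr_fun measurableSet_Ioi (g := fun _ => (0:ℝ)) ?_, integral_zero]
      intro γ hγ
      have hγu : t⁻¹ < γ := hγ
      have hγ1 : (1:ℝ) < γ := lt_of_le_of_lt hu1 hγu
      have hγ0 : (0:ℝ) < γ := by linarith
      have hgt : 1 < γ * t := by
        rw [← inv_mul_cancel₀ (ne_of_gt h0)]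
        exact mul_lt_mul_of_pos_right hγu h0
      unfold Gfun
      rw [max_eq_right (by linarith), max_eq_right (by linarith), zero_div, zero_div, add_zero]
    have e1 : ∫ γ in Ioc 1 t⁻¹, Gfun t γ = (1 - t) - t * Real.log t⁻¹ := by
      have heq : EqOn (Gfun t) (fun γ => γ ^ (-2:ℤ) - t * (1/γ)) (Ioc 1 t⁻¹) := by
        intro γ hγ
        obtain ⟨hγ1, hγu⟩ := hγ
        have hγ0 : (0:ℝ) < γ := by linarith
        have hγt : γ * t ≤ 1 := by
          rw [← inv_mul_cancel₀ (ne_of_gt h0)]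
          exact mul_le_mul_of_nonneg_right hγu ht
        show Gfun t γ = γ ^ (-2:ℤ) - t * (1/γ)
        unfold Gfun
        rw [max_eq_right (by nlinarith), max_eq_left (by linarith), zero_div, zero_add,
          zpow_neg, zpow_two]
        have hne : γ ≠ 0 := ne_of_gt hγ0
        field_simp
        try ring
        try tauto
      rw [setIntegral_congr_fun measurableSet_Ioc heq, ← intervalIntegral.integral_of_le hu1,
        intervalIntegral.integral_sub (intervalIntegral.intervalIntegrable_zpow (Or.inr h0uIcc))
          ((intervalIntegral.intervalIntegrable_one_div (fun x hx h => by rw [h] at hx; exact h0uIcc hx)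
            (by fun_prop)).const_mul t),
        intervalIntegral.integral_const_mul, integral_one_div h0uIcc,
        integral_zpow (Or.inr ⟨by norm_num, h0uIcc⟩)]
      rw [div_one]
      norm_num
      ring
    rw [e1, e2, Real.log_inv]; ring

lemma abstract_ineq {X : Type*} [MeasurableSpace X] [Nonempty X] (ν : Measure X)
    [IsProbabilityMeasure ν] (g ψ : X → ℝ) (hg0 : ∀ x, 0 ≤ g x) (η : ℝ) (hη : 0 ≤ η)
    (hosc : ∀ x x', g x - g x' ≤ η)
    (hψ : Integrable ψ ν) (hgψ : Integrable (fun x => g x * ψ x) ν)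
    (hmax : Integrable (fun x => max (ψ x) 0) ν)
    (hψ0 : ∫ x, ψ x ∂ν ≤ 0) :
    ∫ x, g x * ψ x ∂ν ≤ η * ∫ x, max (ψ x) 0 ∂ν := by
  set c := ⨅ x, g x with hc
  have hbdd : BddBelow (Set.range g) := ⟨0, by rintro _ ⟨x, rfl⟩; exact hg0 x⟩
  have hc0 : 0 ≤ c := le_ciInf hg0
  have hcle : ∀ x, c ≤ g x := fun x => ciInf_le hbdd x
  have hgc : ∀ x, g x - c ≤ η := by
    intro x
    have : g x - η ≤ c := le_ciInf fun x' => by linarith [hosc x x']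
    linarith
  have hdiff : Integrable (fun x => (g x - c) * ψ x) ν := by
    have h : ∀ x, (g x - c) * ψ x = g x * ψ x - c * ψ x := fun x => by ring
    simp_rw [h]
    exact hgψ.sub (hψ.const_mul c)
  have hsplit : ∫ x, g x * ψ x ∂ν = ∫ x, (g x - c) * ψ x ∂ν + c * ∫ x, ψ x ∂ν := by
    have h : ∀ x, (g x - c) * ψ x = g x * ψ x - c * ψ x := fun x => by ring
    simp_rw [h]
    rw [integral_sub hgψ (hψ.const_mul c), integral_const_mul]
    ring
  have hmono : ∫ x, (g x - c) * ψ x ∂ν ≤ ∫ x, η * max (ψ x) 0 ∂ν := by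
    refine integral_mono hdiff (hmax.const_mul η) fun x => ?_
    rcases le_or_gt 0 (ψ x) with h | h
    · rw [max_eq_left h]
      exact mul_le_mul (hgc x) le_rfl h hη
    · rw [max_eq_right h.le, mul_zero]
      exact mul_nonpos_of_nonneg_of_nonpos (by linarith [hcle x]) h.le
  have hcψ : c * ∫ x, ψ x ∂ν ≤ 0 := mul_nonpos_of_nonneg_of_nonpos hc0 hψ0
  have hconst : ∫ x, η * max (ψ x) 0 ∂ν = η * ∫ x, max (ψ x) 0 ∂ν := integral_const_mul η _
  rw [hsplit]
  linarith
/-- KL divergence `D(μ‖ν) = ∫ log(dμ/dν) dμ`. -/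
noncomputable def klDiv {Ω : Type*} [MeasurableSpace Ω] (μ ν : Measure Ω) : ℝ :=
  ∫ ω, Real.log ((μ.rnDeriv ν ω).toReal) ∂μ

/-- Strong data processing inequality with the Dobrushin contraction coefficient,
for a Markov kernel `κ` from a measurable space `X` to a finite output alphabet `Y`. -/
theorem stmt12 {X : Type*} [MeasurableSpace X] {Y : Type*} [Fintype Y] [Nonempty Y]
    (κ : X → Y → ℝ)
    (hmeas : ∀ y, Measurable fun x => κ x y)
    (hnonneg : ∀ x y, 0 ≤ κ x y)
    (hsum : ∀ x, ∑ y, κ x y = 1)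
    (μ ν : Measure X) [IsProbabilityMeasure μ] [IsProbabilityMeasure ν]
    (hac : μ ≪ ν)
    (hfin : Integrable (fun x => Real.log ((μ.rnDeriv ν x).toReal)) μ) :
    ∑ y, (∫ x, κ x y ∂μ) * Real.log ((∫ x, κ x y ∂μ) / (∫ x, κ x y ∂ν))
      ≤ (⨆ (x : X) (x' : X), 1 / 2 * ∑ y, |κ x y - κ x' y|) * klDiv μ ν := by
  -- X is nonempty
  haveI hXne : Nonempty X := by
    by_contra h
    rw [not_nonempty_iff] at h
    have h1 : μ Set.univ = 1 := measure_univ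
    rw [Set.univ_eq_empty_iff.mpr h] at h1
    simp at h1
  -- basic notation
  set F : X → ℝ := fun x => (μ.rnDeriv ν x).toReal with hFdef
  have hFmeas : Measurable F := (Measure.measurable_rnDeriv μ ν).ennreal_toReal
  have hFnn : ∀ x, 0 ≤ F x := fun x => ENNReal.toReal_nonneg
  have hF : Integrable F ν := Measure.integrable_toReal_rnDeriv
  have hFint : ∫ x, F x ∂ν = 1 := by
    rw [hFdef, Measure.integral_toReal_rnDeriv hac]
    simp
  -- kernel bounds and integrability
  have hκ1 : ∀ x y, κ x y ≤ 1 := fun x y =>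
    (Finset.single_le_sum (fun i _ => hnonneg x i) (Finset.mem_univ y)).trans_eq (hsum x)
  have hκb : ∀ x y, ‖κ x y‖ ≤ 1 := fun x y => by
    rw [Real.norm_eq_abs, abs_of_nonneg (hnonneg x y)]; exact hκ1 x y
  have hκintμ : ∀ y, Integrable (fun x => κ x y) μ := fun y =>
    Integrable.mono' (integrable_const 1) (hmeas y).aestronglyMeasurable
      (Filter.Eventually.of_forall fun x => hκb x y)
  have hκintν : ∀ y, Integrable (fun x => κ x y) ν := fun y =>
    Integrable.mono' (integrable_const 1) (hmeas y).aestronglyMeasurable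
      (Filter.Eventually.of_forall fun x => hκb x y)
  set p : Y → ℝ := fun y => ∫ x, κ x y ∂μ with hpdef
  set q : Y → ℝ := fun y => ∫ x, κ x y ∂ν with hqdef
  have hpnn : ∀ y, 0 ≤ p y := fun y => integral_nonneg fun x => hnonneg x y
  have hqnn : ∀ y, 0 ≤ q y := fun y => integral_nonneg fun x => hnonneg x y
  have hq0 : ∀ y, q y = 0 → p y = 0 := by
    intro y h
    have h0 : (fun x => κ x y) =ᵐ[ν] 0 :=
      (integral_eq_zero_iff_of_nonneg (fun x => hnonneg x y) (hκintν y)).1 h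
    have h0' : (fun x => κ x y) =ᵐ[μ] 0 := h0.filter_mono hac.ae_le
    rw [hpdef]
    simpa using integral_congr_ae h0'
  have hpsum : ∑ y, p y = 1 := by
    rw [hpdef, ← integral_finset_sum _ fun y _ => hκintμ y]
    simp [hsum]
  have hqsum : ∑ y, q y = 1 := by
    rw [hqdef, ← integral_finset_sum _ fun y _ => hκintν y]
    simp [hsum]
  -- the Dobrushin coefficient
  set η : ℝ := ⨆ (x : X) (x' : X), 1 / 2 * ∑ y, |κ x y - κ x' y| with hηdef
  have hD1 : ∀ x x', 1 / 2 * ∑ y, |κ x y - κ x' y| ≤ 1 := by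
    intro x x'
    have : ∑ y, |κ x y - κ x' y| ≤ ∑ y, (κ x y + κ x' y) :=
      Finset.sum_le_sum fun y _ =>
        abs_le.2 ⟨by linarith [hnonneg x y, hnonneg x' y], by linarith [hnonneg x y, hnonneg x' y]⟩
    rw [Finset.sum_add_distrib, hsum x, hsum x'] at this
    linarith
  have hbddi : ∀ x, BddAbove (Set.range fun x' => 1 / 2 * ∑ y, |κ x y - κ x' y|) := fun x =>
    ⟨1, by rintro _ ⟨x', rfl⟩; exact hD1 x x'⟩
  have hbddo : BddAbove (Set.range fun x => ⨆ x', 1 / 2 * ∑ y, |κ x y - κ x' y|) :=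
    ⟨1, by rintro _ ⟨x, rfl⟩; exact ciSup_le fun x' => hD1 x x'⟩
  have hDle : ∀ x x', 1 / 2 * ∑ y, |κ x y - κ x' y| ≤ η := fun x x' =>
    (le_ciSup (hbddi x) x').trans (le_ciSup hbddo x)
  have hη0 : 0 ≤ η := by
    obtain x0 := Classical.arbitrary X
    refine le_trans ?_ (hDle x0 x0)
    have : ∀ y, |κ x0 y - κ x0 y| = 0 := fun y => by simp
    simp [this]
  -- oscillation bound for partial sums of the kernel
  have hoscA : ∀ (A : Finset Y) (x x' : X), (∑ y ∈ A, κ x y) - ∑ y ∈ A, κ x' y ≤ η := by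
    intro A x x'
    have hzero : ∑ y, (κ x y - κ x' y) = 0 := by
      rw [Finset.sum_sub_distrib, hsum x, hsum x']; ring
    have habs : ∑ y, max (κ x y - κ x' y) 0 = 1 / 2 * ∑ y, |κ x y - κ x' y| := by
      have hpt : ∀ a : ℝ, max a 0 = (a + |a|) / 2 := by
        intro a
        rcases le_or_gt 0 a with h | h
        · rw [max_eq_left h, abs_of_nonneg h]; ring
        · rw [max_eq_right h.le, abs_of_neg h]; ring
      rw [Finset.sum_congr rfl fun y _ => hpt _]
      rw [← Finset.sum_div, Finset.sum_add_distrib, hzero]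
      ring
    calc (∑ y ∈ A, κ x y) - ∑ y ∈ A, κ x' y
        = ∑ y ∈ A, (κ x y - κ x' y) := (Finset.sum_sub_distrib _ _).symm
      _ ≤ ∑ y ∈ A, max (κ x y - κ x' y) 0 := Finset.sum_le_sum fun y _ => le_max_left _ 0
      _ ≤ ∑ y, max (κ x y - κ x' y) 0 :=
          Finset.sum_le_sum_of_subset_of_nonneg (Finset.subset_univ A)
            (fun y _ _ => le_max_right _ 0)
      _ = 1 / 2 * ∑ y, |κ x y - κ x' y| := habs
      _ ≤ η := hDle x x'
  -- integrability of positive parts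
  have hmaxa : ∀ γ : ℝ, Integrable (fun x => max (F x - γ) 0) ν := by
    intro γ
    refine Integrable.mono' (hF.add (integrable_const |γ|))
      ((hFmeas.sub measurable_const).max measurable_const).aestronglyMeasurable
      (Filter.Eventually.of_forall fun x => ?_)
    rw [Real.norm_eq_abs, abs_of_nonneg (le_max_right _ 0)]
    show max (F x - γ) 0 ≤ F x + |γ|
    exact max_le (by linarith [neg_abs_le γ]) (by positivity)
  have hmaxb : ∀ γ : ℝ, Integrable (fun x => max (1 - γ * F x) 0) ν := by
    intro γ
    refine Integrable.mono' ((integrable_const 1).add ((hF.const_mul |γ|)))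
      ((measurable_const.sub (hFmeas.const_mul γ)).max measurable_const).aestronglyMeasurable
      (Filter.Eventually.of_forall fun x => ?_)
    rw [Real.norm_eq_abs, abs_of_nonneg (le_max_right _ 0)]
    show max (1 - γ * F x) 0 ≤ 1 + |γ| * F x
    refine max_le ?_ (by positivity)
    nlinarith [hFnn x, mul_le_mul_of_nonneg_right (neg_le_abs γ) (hFnn x)]
  -- per-γ inequality, first part
  have key1 : ∀ γ : ℝ, 1 ≤ γ →
      (∑ y, max (p y - γ * q y) 0) ≤ η * ∫ x, max (F x - γ) 0 ∂ν := by
    intro γ hγ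
    set A : Finset Y := Finset.univ.filter (fun y => γ * q y < p y) with hAdef
    set g : X → ℝ := fun x => ∑ y ∈ A, κ x y with hgdef
    have hgmeas : Measurable g := Finset.measurable_sum _ fun y _ => hmeas y
    have hg0 : ∀ x, 0 ≤ g x := fun x => Finset.sum_nonneg fun y _ => hnonneg x y
    have hg1 : ∀ x, g x ≤ 1 := fun x =>
      (Finset.sum_le_sum_of_subset_of_nonneg (Finset.subset_univ A)
        (fun y _ _ => hnonneg x y)).trans_eq (hsum x)
    have hgb : ∀ x, ‖g x‖ ≤ 1 := fun x => by
      rw [Real.norm_eq_abs, abs_of_nonneg (hg0 x)]; exact hg1 x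
    have hgintμ : Integrable g μ :=
      Integrable.mono' (integrable_const 1) hgmeas.aestronglyMeasurable
        (Filter.Eventually.of_forall hgb)
    have hgintν : Integrable g ν :=
      Integrable.mono' (integrable_const 1) hgmeas.aestronglyMeasurable
        (Filter.Eventually.of_forall hgb)
    have hsumEq : ∑ y, max (p y - γ * q y) 0 = (∫ x, g x ∂μ) - γ * ∫ x, g x ∂ν := by
      have hstep : ∀ y, max (p y - γ * q y) 0 = if γ * q y < p y then p y - γ * q y else 0 := by
        intro y
        split
        · rename_i h; rw [max_eq_left (by linarith)]
        · rename_i h; rw [max_eq_right (by push_neg at h; linarith)]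
      rw [Finset.sum_congr rfl fun y _ => hstep y, ← Finset.sum_filter, ← hAdef]
      rw [Finset.sum_sub_distrib, ← Finset.mul_sum]
      have h1 : ∑ y ∈ A, p y = ∫ x, g x ∂μ := by
        rw [hpdef, hgdef, integral_finset_sum A fun y _ => hκintμ y]
      have h2 : ∑ y ∈ A, q y = ∫ x, g x ∂ν := by
        rw [hqdef, hgdef, integral_finset_sum A fun y _ => hκintν y]
      rw [h1, h2]
    have hψint : Integrable (fun x => F x - γ) ν := hF.sub (integrable_const γ)
    have hgψ : Integrable (fun x => g x * (F x - γ)) ν :=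
      Integrable.bdd_mul hψint hgmeas.aestronglyMeasurable (Filter.Eventually.of_forall hgb)
    have hψ0 : ∫ x, (F x - γ) ∂ν ≤ 0 := by
      rw [integral_sub hF (integrable_const γ), hFint, integral_const]
      simp
      linarith
    have hFg : Integrable (fun x => g x * F x) ν :=
      Integrable.bdd_mul hF hgmeas.aestronglyMeasurable (Filter.Eventually.of_forall hgb)
    have hEqInt : ∫ x, g x * (F x - γ) ∂ν = (∫ x, g x ∂μ) - γ * ∫ x, g x ∂ν := by
      have hpt : ∀ x, g x * (F x - γ) = g x * F x - γ * g x := fun x => by ring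
      simp_rw [hpt]
      rw [integral_sub hFg (hgintν.const_mul γ), integral_const_mul]
      have : ∫ x, g x * F x ∂ν = ∫ x, g x ∂μ := by
        have h := MeasureTheory.integral_rnDeriv_smul hac (f := g)
        simp only [smul_eq_mul] at h
        rw [← h]
        exact integral_congr_ae (Filter.Eventually.of_forall fun x => mul_comm _ _)
      rw [this]
    rw [hsumEq, ← hEqInt]
    exact abstract_ineq ν g (fun x => F x - γ) hg0 η hη0
      (fun x x' => hoscA A x x') hψint hgψ (hmaxa γ) hψ0
  -- per-γ inequality, second part
  have key2 : ∀ γ : ℝ, 1 ≤ γ →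
      (∑ y, max (q y - γ * p y) 0) ≤ η * ∫ x, max (1 - γ * F x) 0 ∂ν := by
    intro γ hγ
    set A : Finset Y := Finset.univ.filter (fun y => γ * p y < q y) with hAdef
    set g : X → ℝ := fun x => ∑ y ∈ A, κ x y with hgdef
    have hgmeas : Measurable g := Finset.measurable_sum _ fun y _ => hmeas y
    have hg0 : ∀ x, 0 ≤ g x := fun x => Finset.sum_nonneg fun y _ => hnonneg x y
    have hg1 : ∀ x, g x ≤ 1 := fun x =>
      (Finset.sum_le_sum_of_subset_of_nonneg (Finset.subset_univ A)
        (fun y _ _ => hnonneg x y)).trans_eq (hsum x)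
    have hgb : ∀ x, ‖g x‖ ≤ 1 := fun x => by
      rw [Real.norm_eq_abs, abs_of_nonneg (hg0 x)]; exact hg1 x
    have hgintμ : Integrable g μ :=
      Integrable.mono' (integrable_const 1) hgmeas.aestronglyMeasurable
        (Filter.Eventually.of_forall hgb)
    have hgintν : Integrable g ν :=
      Integrable.mono' (integrable_const 1) hgmeas.aestronglyMeasurable
        (Filter.Eventually.of_forall hgb)
    have hsumEq : ∑ y, max (q y - γ * p y) 0 = (∫ x, g x ∂ν) - γ * ∫ x, g x ∂μ := by
      have hstep : ∀ y, max (q y - γ * p y) 0 = if γ * p y < q y then q y - γ * p y else 0 := by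
        intro y
        split
        · rename_i h; rw [max_eq_left (by linarith)]
        · rename_i h; rw [max_eq_right (by push_neg at h; linarith)]
      rw [Finset.sum_congr rfl fun y _ => hstep y, ← Finset.sum_filter, ← hAdef]
      rw [Finset.sum_sub_distrib, ← Finset.mul_sum]
      have h1 : ∑ y ∈ A, p y = ∫ x, g x ∂μ := by
        rw [hpdef, hgdef, integral_finset_sum A fun y _ => hκintμ y]
      have h2 : ∑ y ∈ A, q y = ∫ x, g x ∂ν := by
        rw [hqdef, hgdef, integral_finset_sum A fun y _ => hκintν y]
      rw [h1, h2]
    have hψint : Integrable (fun x => 1 - γ * F x) ν :=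
      (integrable_const 1).sub (hF.const_mul γ)
    have hgψ : Integrable (fun x => g x * (1 - γ * F x)) ν :=
      Integrable.bdd_mul hψint hgmeas.aestronglyMeasurable (Filter.Eventually.of_forall hgb)
    have hψ0 : ∫ x, (1 - γ * F x) ∂ν ≤ 0 := by
      rw [integral_sub (integrable_const 1) (hF.const_mul γ), integral_const_mul, hFint,
        integral_const]
      simp
      linarith
    have hFg : Integrable (fun x => g x * F x) ν :=
      Integrable.bdd_mul hF hgmeas.aestronglyMeasurable (Filter.Eventually.of_forall hgb)
    have hEqInt : ∫ x, g x * (1 - γ * F x) ∂ν = (∫ x, g x ∂ν) - γ * ∫ x, g x ∂μ := by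
      have hpt : ∀ x, g x * (1 - γ * F x) = g x - γ * (g x * F x) := fun x => by ring
      simp_rw [hpt]
      rw [integral_sub hgintν ((hFg).const_mul γ), integral_const_mul]
      have : ∫ x, g x * F x ∂ν = ∫ x, g x ∂μ := by
        have h := MeasureTheory.integral_rnDeriv_smul hac (f := g)
        simp only [smul_eq_mul] at h
        rw [← h]
        exact integral_congr_ae (Filter.Eventually.of_forall fun x => mul_comm _ _)
      rw [this]
    rw [hsumEq, ← hEqInt]
    exact abstract_ineq ν g (fun x => 1 - γ * F x) hg0 η hη0
      (fun x x' => hoscA A x x') hψint hgψ (hmaxb γ) hψ0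
  -- the functions a, b, W
  set a : ℝ → ℝ := fun γ => ∫ x, max (F x - γ) 0 ∂ν with hadef
  set b : ℝ → ℝ := fun γ => ∫ x, max (1 - γ * F x) 0 ∂ν with hbdef
  have hanti_a : Antitone a := by
    intro γ γ' h
    exact integral_mono (hmaxa γ') (hmaxa γ) fun x => max_le_max (by linarith) le_rfl
  have hanti_b : Antitone b := by
    intro γ γ' h
    refine integral_mono (hmaxb γ') (hmaxb γ) fun x => max_le_max ?_ le_rfl
    have := mul_le_mul_of_nonneg_right h (hFnn x)
    linarith
  have ha_meas : Measurable a := hanti_a.measurable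
  have hb_meas : Measurable b := hanti_b.measurable
  have hann : ∀ γ, 0 ≤ a γ := fun γ => integral_nonneg fun x => le_max_right _ 0
  have hbnn : ∀ γ, 0 ≤ b γ := fun γ => integral_nonneg fun x => le_max_right _ 0
  set W : ℝ → ℝ := fun γ => a γ / γ + b γ / γ ^ 2 with hWdef
  have hWmeas : Measurable W :=
    (ha_meas.div measurable_id).add (hb_meas.div (measurable_id.pow_const 2))
  have hWnn : ∀ γ, 0 < γ → 0 ≤ W γ := fun γ hγ => by
    have := hann γ; have := hbnn γ
    positivity
  have hGint : ∀ γ : ℝ, Integrable (fun x => Gfun (F x) γ) ν := by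
    intro γ
    have h := ((hmaxa γ).div_const γ).add ((hmaxb γ).div_const (γ ^ 2))
    exact h.congr (Filter.Eventually.of_forall fun x => rfl)
  have hWeq : ∀ γ : ℝ, W γ = ∫ x, Gfun (F x) γ ∂ν := by
    intro γ
    rw [hWdef]
    show a γ / γ + b γ / γ ^ 2 = _
    rw [hadef, hbdef]
    show (∫ x, max (F x - γ) 0 ∂ν) / γ + (∫ x, max (1 - γ * F x) 0 ∂ν) / γ ^ 2 = _
    rw [← integral_div, ← integral_div,
      ← integral_add ((hmaxa γ).div_const γ) ((hmaxb γ).div_const (γ ^ 2))]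
    rfl
  -- the function Φ and its properties
  set Φ : X → ℝ := fun x => F x * Real.log (F x) - F x + 1 with hΦdef
  have hFlogF : Integrable (fun x => F x * Real.log (F x)) ν := by
    have h := (MeasureTheory.integrable_rnDeriv_smul_iff hac
      (f := fun x => Real.log (F x))).2 hfin
    simpa [smul_eq_mul] using h
  have hΦint : Integrable Φ ν := (hFlogF.sub hF).add (integrable_const 1)
  have hΦnn : ∀ x, 0 ≤ Φ x := by
    intro x
    rw [hΦdef]
    show 0 ≤ F x * Real.log (F x) - F x + 1
    rcases eq_or_lt_of_le (hFnn x) with h | h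
    · rw [← h]; simp
    · have h1 : Real.log (F x)⁻¹ ≤ (F x)⁻¹ - 1 := Real.log_le_sub_one_of_pos (inv_pos.2 h)
      rw [Real.log_inv] at h1
      have h2 : F x * (F x)⁻¹ = 1 := mul_inv_cancel₀ h.ne'
      nlinarith [mul_le_mul_of_nonneg_left h1 h.le]
  have hΦ0 : 0 ≤ ∫ x, Φ x ∂ν := integral_nonneg hΦnn
  have hklD : ∫ x, Φ x ∂ν = klDiv μ ν := by
    have hkl : klDiv μ ν = ∫ x, Real.log (F x) ∂μ := rfl
    have h2 : ∫ x, F x * Real.log (F x) ∂ν = ∫ x, Real.log (F x) ∂μ := by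
      have h := MeasureTheory.integral_rnDeriv_smul hac (f := fun x => Real.log (F x))
      simpa [smul_eq_mul] using h
    have h3 : Integrable (fun x => F x * Real.log (F x) - F x) ν := hFlogF.sub hF
    have e1 : ∫ x, Φ x ∂ν
        = (∫ x, (F x * Real.log (F x) - F x) ∂ν) + ∫ _x, (1:ℝ) ∂ν :=
      integral_add h3 (integrable_const 1)
    have e2 : ∫ x, (F x * Real.log (F x) - F x) ∂ν
        = (∫ x, F x * Real.log (F x) ∂ν) - ∫ x, F x ∂ν := integral_sub hFlogF hF
    rw [e1, e2, hFint, h2, hkl, integral_const]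
    simp
  -- Tonelli
  have hGprodmeas : AEMeasurable (Function.uncurry fun γ x => ENNReal.ofReal (Gfun (F x) γ))
      ((volume.restrict (Ioi (1:ℝ))).prod ν) := by
    refine Measurable.aemeasurable (Measurable.ennreal_ofReal ?_)
    have : Measurable fun z : ℝ × X => Gfun (F z.2) z.1 := by
      unfold Gfun
      exact ((((hFmeas.comp measurable_snd).sub measurable_fst).max measurable_const).div
          measurable_fst).add
        (((measurable_const.sub (measurable_fst.mul (hFmeas.comp measurable_snd))).max
          measurable_const).div (measurable_fst.pow_const 2))
    exact this
  have hinner : ∀ x, (∫⁻ γ in Ioi (1:ℝ), ENNReal.ofReal (Gfun (F x) γ)) = ENNReal.ofReal (Φ x) := by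
    intro x
    have hnn : 0 ≤ᵐ[volume.restrict (Ioi (1:ℝ))] Gfun (F x) := by
      rw [Filter.EventuallyLE, ae_restrict_iff' measurableSet_Ioi]
      exact Filter.Eventually.of_forall fun γ hγ => Gfun_nonneg (lt_trans one_pos hγ)
    rw [← ofReal_integral_eq_lintegral_ofReal (Gfun_intOn (F x) (hFnn x)) hnn,
      Gfun_integral (F x) (hFnn x)]
  have hL : (∫⁻ γ in Ioi (1:ℝ), ENNReal.ofReal (W γ)) = ENNReal.ofReal (∫ x, Φ x ∂ν) := by
    have h1 : ∀ᵐ γ ∂(volume : Measure ℝ), γ ∈ Ioi (1:ℝ) →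
        ENNReal.ofReal (W γ) = ∫⁻ x, ENNReal.ofReal (Gfun (F x) γ) ∂ν := by
      refine Filter.Eventually.of_forall fun γ hγ => ?_
      have hγ0 : (0:ℝ) < γ := lt_trans one_pos hγ
      rw [hWeq γ, ofReal_integral_eq_lintegral_ofReal (hGint γ)
        (Filter.Eventually.of_forall fun x => Gfun_nonneg hγ0)]
    rw [setLIntegral_congr_fun_ae measurableSet_Ioi h1]
    rw [lintegral_lintegral_swap hGprodmeas]
    rw [lintegral_congr fun x => hinner x]
    rw [← ofReal_integral_eq_lintegral_ofReal hΦint (Filter.Eventually.of_forall hΦnn)]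
  have hWaes : AEStronglyMeasurable W (volume.restrict (Ioi (1:ℝ))) :=
    hWmeas.aestronglyMeasurable
  have hWnnae : 0 ≤ᵐ[volume.restrict (Ioi (1:ℝ))] W := by
    rw [Filter.EventuallyLE, ae_restrict_iff' measurableSet_Ioi]
    exact Filter.Eventually.of_forall fun γ hγ => hWnn γ (lt_trans one_pos hγ)
  have hWint : IntegrableOn W (Ioi (1:ℝ)) := by
    refine ⟨hWaes, ?_⟩
    rw [hasFiniteIntegral_iff_ofReal hWnnae]
    rw [hL]
    exact ENNReal.ofReal_lt_top
  have hWval : ∫ γ in Ioi (1:ℝ), W γ = ∫ x, Φ x ∂ν := by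
    rw [integral_eq_lintegral_of_nonneg_ae hWnnae hWaes, hL, ENNReal.toReal_ofReal hΦ0]
  -- per-y integrand
  have hsInt : ∀ y : Y, IntegrableOn
      (fun γ => max (p y - γ * q y) 0 / γ + max (q y - γ * p y) 0 / γ ^ 2) (Ioi (1:ℝ)) := by
    intro y
    rcases eq_or_lt_of_le (hqnn y) with h | h
    · have hp : p y = 0 := hq0 y h.symm
      have : (fun γ : ℝ => max (p y - γ * q y) 0 / γ + max (q y - γ * p y) 0 / γ ^ 2)
          = fun _ => 0 := by
        funext γ; rw [← h, hp]; simp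
      rw [this]
      exact integrableOn_zero
    · have hq' : q y ≠ 0 := ne_of_gt h
      have heq : EqOn (fun γ => q y * Gfun (p y / q y) γ)
          (fun γ => max (p y - γ * q y) 0 / γ + max (q y - γ * p y) 0 / γ ^ 2) (Ioi 1) := by
        intro γ hγ
        have e1 : q y * (p y / q y - γ) = p y - γ * q y := by field_simp
        have e2 : q y * (1 - γ * (p y / q y)) = q y - γ * p y := by field_simp
        show q y * Gfun (p y / q y) γ = _
        unfold Gfun
        rw [mul_add, mul_div_assoc', mul_div_assoc',
          mul_max_of_nonneg _ _ h.le, mul_zero, e1,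
          mul_max_of_nonneg _ _ h.le, mul_zero, e2]
      exact IntegrableOn.congr_fun
        ((Gfun_intOn (p y / q y) (div_nonneg (hpnn y) (hqnn y))).const_mul (q y))
        heq measurableSet_Ioi
  have hsVal : ∀ y : Y, (∫ γ in Ioi (1:ℝ),
        (max (p y - γ * q y) 0 / γ + max (q y - γ * p y) 0 / γ ^ 2))
      = p y * Real.log (p y / q y) - p y + q y := by
    intro y
    rcases eq_or_lt_of_le (hqnn y) with h | h
    · have hp : p y = 0 := hq0 y h.symm
      have hz : (fun γ : ℝ => max (p y - γ * q y) 0 / γ + max (q y - γ * p y) 0 / γ ^ 2)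
          = fun _ => 0 := by
        funext γ; rw [← h, hp]; simp
      rw [hz, ← h, hp]
      simp
    · have hq' : q y ≠ 0 := ne_of_gt h
      have heq : EqOn (fun γ => q y * Gfun (p y / q y) γ)
          (fun γ => max (p y - γ * q y) 0 / γ + max (q y - γ * p y) 0 / γ ^ 2) (Ioi 1) := by
        intro γ hγ
        have e1 : q y * (p y / q y - γ) = p y - γ * q y := by field_simp
        have e2 : q y * (1 - γ * (p y / q y)) = q y - γ * p y := by field_simp
        show q y * Gfun (p y / q y) γ = _
        unfold Gfun
        rw [mul_add, mul_div_assoc', mul_div_assoc',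
          mul_max_of_nonneg _ _ h.le, mul_zero, e1,
          mul_max_of_nonneg _ _ h.le, mul_zero, e2]
      rw [← setIntegral_congr_fun measurableSet_Ioi heq, integral_const_mul,
        Gfun_integral (p y / q y) (div_nonneg (hpnn y) (hqnn y))]
      field_simp
      try ring
  -- pointwise comparison of the sums with η * W
  have hmono : ∀ γ ∈ Ioi (1:ℝ),
      (∑ y, (max (p y - γ * q y) 0 / γ + max (q y - γ * p y) 0 / γ ^ 2)) ≤ η * W γ := by
    intro γ hγ
    have hγ1 : (1:ℝ) < γ := hγ
    have hγ0 : (0:ℝ) < γ := lt_trans one_pos hγ1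
    have hW' : η * W γ = η * a γ / γ + η * b γ / γ ^ 2 := by
      rw [hWdef]; show η * (a γ / γ + b γ / γ ^ 2) = _; ring
    rw [Finset.sum_add_distrib, ← Finset.sum_div, ← Finset.sum_div, hW']
    have h1 := key1 γ hγ1.le
    have h2 := key2 γ hγ1.le
    have ha' : (∑ y, max (p y - γ * q y) 0) ≤ η * a γ := h1
    have hb' : (∑ y, max (q y - γ * p y) 0) ≤ η * b γ := h2
    gcongr
  -- final chain
  have hLHS : (∑ y, p y * Real.log (p y / q y))
      = ∑ y, (p y * Real.log (p y / q y) - p y + q y) := by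
    rw [Finset.sum_add_distrib, Finset.sum_sub_distrib, hpsum, hqsum]
    ring
  show (∑ y, p y * Real.log (p y / q y)) ≤ η * klDiv μ ν
  rw [hLHS]
  calc ∑ y, (p y * Real.log (p y / q y) - p y + q y)
      = ∑ y, ∫ γ in Ioi (1:ℝ),
          (max (p y - γ * q y) 0 / γ + max (q y - γ * p y) 0 / γ ^ 2) := by
        exact Finset.sum_congr rfl fun y _ => (hsVal y).symm
    _ = ∫ γ in Ioi (1:ℝ),
          ∑ y, (max (p y - γ * q y) 0 / γ + max (q y - γ * p y) 0 / γ ^ 2) := by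
        exact (integral_finset_sum Finset.univ fun y _ => hsInt y).symm
    _ ≤ ∫ γ in Ioi (1:ℝ), η * W γ := by
        refine setIntegral_mono_on (integrable_finset_sum Finset.univ fun y _ => hsInt y)
          (hWint.const_mul η) measurableSet_Ioi hmono
    _ = η * ∫ γ in Ioi (1:ℝ), W γ := integral_const_mul η W
    _ = η * klDiv μ ν := by rw [hWval, hklD]
end

section
/- Fix an integer K ≥ 2 and reals ε_e > 0 and ε_a ∈ (0,1). Then the map Δ ↦ Ã(Δ, ε_a, ε_e, K) is strictly increasing on the interval [0, ε_a/(1−ε_a)) (equivalently, on the set of Δ ≥ 0 satisfying Δ/(1+Δ) < ε_a), and Ã(0, ε_a, ε_e, K) = 0. -/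
set_option maxHeartbeats 800000


/-- The approximate upper bound `Ã(Δ, ε_a, ε_e, K)` on the attacker's advantage
under confidence-vector disclosure. -/
noncomputable def Atilde (Δ epsA epsE : ℝ) (K : ℕ) : ℝ :=
  Real.sqrt ((Δ * (1 - epsA) / epsE) * Real.log ((1 + Δ) * epsA / ((1 + Δ) * epsA - Δ))
    + Δ ^ 2 * (1 - epsA) ^ 2 * ((K : ℝ) - 1) / (2 * epsA * ((1 + Δ) * epsA - Δ))
    + Δ ^ 2 / (2 * (1 + Δ)))

/-- `Ã` is strictly increasing in the relative calibration error `Δ` on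
`[0, ε_a/(1-ε_a))` (the set of `Δ ≥ 0` with `Δ/(1+Δ) < ε_a`), and vanishes at `Δ = 0`. -/
theorem stmt15 (K : ℕ) (hK : 2 ≤ K) (epsE epsA : ℝ)
    (hεe : 0 < epsE) (hεa₀ : 0 < epsA) (hεa₁ : epsA < 1) :
    StrictMonoOn (fun Δ => Atilde Δ epsA epsE K) (Set.Ico 0 (epsA / (1 - epsA)))
      ∧ Atilde 0 epsA epsE K = 0 := by
  have hs : 0 < 1 - epsA := by linarith
  have hK1 : (1:ℝ) ≤ (K:ℝ) - 1 := by
    have : (2:ℝ) ≤ (K:ℝ) := by exact_mod_cast hK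
    linarith
  constructor
  · intro a ha b hb hab
    simp only [Set.mem_Ico] at ha hb
    obtain ⟨ha0, ha1⟩ := ha
    obtain ⟨hb0, hb1⟩ := hb
    have ha1' : a * (1 - epsA) < epsA := by
      rwa [lt_div_iff₀ hs] at ha1
    have hb1' : b * (1 - epsA) < epsA := by
      rwa [lt_div_iff₀ hs] at hb1
    have hDa : 0 < (1 + a) * epsA - a := by nlinarith
    have hDb : 0 < (1 + b) * epsA - b := by nlinarith
    have hargb_pos : 0 < (1 + b) * epsA / ((1 + b) * epsA - b) := by positivity
    have hLa : (1:ℝ) ≤ (1 + a) * epsA / ((1 + a) * epsA - a) :=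
      (one_le_div hDa).mpr (by linarith)
    have hLb : (1:ℝ) ≤ (1 + b) * epsA / ((1 + b) * epsA - b) :=
      (one_le_div hDb).mpr (by linarith)
    have hloga : 0 ≤ Real.log ((1 + a) * epsA / ((1 + a) * epsA - a)) :=
      Real.log_nonneg hLa
    have hargmono : (1 + a) * epsA / ((1 + a) * epsA - a)
        ≤ (1 + b) * epsA / ((1 + b) * epsA - b) := by
      rw [div_le_div_iff₀ hDa hDb]
      nlinarith
    have hlog : Real.log ((1 + a) * epsA / ((1 + a) * epsA - a))
        ≤ Real.log ((1 + b) * epsA / ((1 + b) * epsA - b)) :=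
      Real.log_le_log (by positivity) hargmono
    have h1 : (a * (1 - epsA) / epsE) * Real.log ((1 + a) * epsA / ((1 + a) * epsA - a))
        ≤ (b * (1 - epsA) / epsE) * Real.log ((1 + b) * epsA / ((1 + b) * epsA - b)) := by
      apply mul_le_mul _ hlog hloga (by positivity)
      gcongr
    have h2 : a ^ 2 * (1 - epsA) ^ 2 * ((K:ℝ) - 1) / (2 * epsA * ((1 + a) * epsA - a))
        ≤ b ^ 2 * (1 - epsA) ^ 2 * ((K:ℝ) - 1) / (2 * epsA * ((1 + b) * epsA - b)) := by
      rw [div_le_div_iff₀ (by positivity) (by positivity)]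
      have ha2 : a ^ 2 ≤ b ^ 2 := by nlinarith
      have hDba : (1 + b) * epsA - b ≤ (1 + a) * epsA - a := by nlinarith
      have key : (1 - epsA) ^ 2 * ((K:ℝ) - 1) * (a ^ 2 * ((1 + b) * epsA - b))
          ≤ (1 - epsA) ^ 2 * ((K:ℝ) - 1) * (b ^ 2 * ((1 + a) * epsA - a)) :=
        mul_le_mul_of_nonneg_left (mul_le_mul ha2 hDba hDb.le (sq_nonneg b))
          (by positivity)
      have key2 := mul_le_mul_of_nonneg_left key
        (by positivity : (0:ℝ) ≤ 2 * epsA)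
      nlinarith [key2]
    have h3 : a ^ 2 / (2 * (1 + a)) < b ^ 2 / (2 * (1 + b)) := by
      rw [div_lt_div_iff₀ (by linarith) (by linarith)]
      have hbpos : 0 < b := lt_of_le_of_lt ha0 hab
      have hab2 : 0 ≤ a * b := mul_nonneg ha0 hb0
      nlinarith [mul_pos (sub_pos.mpr hab) (show (0:ℝ) < a + b + a * b by linarith)]
    have hnonneg : 0 ≤ (a * (1 - epsA) / epsE) *
          Real.log ((1 + a) * epsA / ((1 + a) * epsA - a))
        + a ^ 2 * (1 - epsA) ^ 2 * ((K:ℝ) - 1) / (2 * epsA * ((1 + a) * epsA - a))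
        + a ^ 2 / (2 * (1 + a)) := by
      have t1 : 0 ≤ (a * (1 - epsA) / epsE) *
          Real.log ((1 + a) * epsA / ((1 + a) * epsA - a)) :=
        mul_nonneg (by positivity) hloga
      have t2 : 0 ≤ a ^ 2 * (1 - epsA) ^ 2 * ((K:ℝ) - 1) /
          (2 * epsA * ((1 + a) * epsA - a)) := by positivity
      have t3 : 0 ≤ a ^ 2 / (2 * (1 + a)) := by positivity
      linarith
    simp only [Atilde]
    exact Real.sqrt_lt_sqrt hnonneg (by linarith)
  · norm_num [Atilde]
end

section
/- Fix an integer K ≥ 2 and reals ε_e > 0 and Δ > 0. Then the map ε_a ↦ Ã(Δ, ε_a, ε_e, K) is strictly decreasing on the interval (Δ/(1+Δ), 1). -/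
/-- `Ã` is strictly decreasing in the aleatoric uncertainty `ε_a` on `(Δ/(1+Δ), 1)`. -/
theorem stmt16 (K : ℕ) (hK : 2 ≤ K) (epsE Δ : ℝ) (hεe : 0 < epsE) (hΔ : 0 < Δ) :
    StrictAntiOn (fun epsA => Atilde Δ epsA epsE K) (Set.Ioo (Δ / (1 + Δ)) 1) := by
  intro x hx y hy hxy
  obtain ⟨hx1, hx2⟩ := hx
  obtain ⟨hy1, hy2⟩ := hy
  have hD : (0:ℝ) < 1 + Δ := by linarith
  have hxpos : 0 < x := lt_trans (div_pos hΔ hD) hx1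
  have hypos : 0 < y := lt_trans (div_pos hΔ hD) hy1
  have hxd : 0 < (1 + Δ) * x - Δ := by
    rw [div_lt_iff₀ hD] at hx1; nlinarith
  have hyd : 0 < (1 + Δ) * y - Δ := by
    rw [div_lt_iff₀ hD] at hy1; nlinarith
  have hKnn : (0:ℝ) ≤ (K : ℝ) - 1 := by
    have : (2:ℝ) ≤ (K : ℝ) := by exact_mod_cast hK
    linarith
  -- log terms
  have hLx : 0 < Real.log ((1 + Δ) * x / ((1 + Δ) * x - Δ)) := by
    apply Real.log_pos
    rw [lt_div_iff₀ hxd]; nlinarith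
  have hLy : 0 ≤ Real.log ((1 + Δ) * y / ((1 + Δ) * y - Δ)) := by
    apply Real.log_nonneg
    rw [le_div_iff₀ hyd]; nlinarith
  have hLle : Real.log ((1 + Δ) * y / ((1 + Δ) * y - Δ)) ≤
      Real.log ((1 + Δ) * x / ((1 + Δ) * x - Δ)) := by
    apply Real.log_le_log (by positivity)
    rw [div_le_div_iff₀ hyd hxd]
    nlinarith [mul_nonneg (mul_nonneg hD.le hΔ.le) (sub_nonneg.mpr hxy.le)]
  -- coefficients
  have hAy : 0 < Δ * (1 - y) / epsE := div_pos (by nlinarith) hεe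
  have hAlt : Δ * (1 - y) / epsE < Δ * (1 - x) / epsE := by
    gcongr
  -- first term strictly decreases
  have hT1 : (Δ * (1 - y) / epsE) * Real.log ((1 + Δ) * y / ((1 + Δ) * y - Δ))
      < (Δ * (1 - x) / epsE) * Real.log ((1 + Δ) * x / ((1 + Δ) * x - Δ)) :=
    calc (Δ * (1 - y) / epsE) * Real.log ((1 + Δ) * y / ((1 + Δ) * y - Δ))
        ≤ (Δ * (1 - y) / epsE) * Real.log ((1 + Δ) * x / ((1 + Δ) * x - Δ)) :=
          mul_le_mul_of_nonneg_left hLle hAy.le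
      _ < (Δ * (1 - x) / epsE) * Real.log ((1 + Δ) * x / ((1 + Δ) * x - Δ)) :=
          mul_lt_mul_of_pos_right hAlt hLx
  have hT1y : 0 ≤ (Δ * (1 - y) / epsE) * Real.log ((1 + Δ) * y / ((1 + Δ) * y - Δ)) :=
    mul_nonneg hAy.le hLy
  -- second term decreases
  have hdenx : 0 < 2 * x * ((1 + Δ) * x - Δ) := by positivity
  have hT2 : Δ ^ 2 * (1 - y) ^ 2 * ((K : ℝ) - 1) / (2 * y * ((1 + Δ) * y - Δ))
      ≤ Δ ^ 2 * (1 - x) ^ 2 * ((K : ℝ) - 1) / (2 * x * ((1 + Δ) * x - Δ)) := by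
    apply div_le_div₀ (by positivity) ?_ hdenx ?_
    · have h2 : (1 - y) ^ 2 ≤ (1 - x) ^ 2 := by nlinarith
      exact mul_le_mul_of_nonneg_right (mul_le_mul_of_nonneg_left h2 (sq_nonneg Δ)) hKnn
    · nlinarith
  have hT2y : 0 ≤ Δ ^ 2 * (1 - y) ^ 2 * ((K : ℝ) - 1) / (2 * y * ((1 + Δ) * y - Δ)) := by
    apply div_nonneg (by positivity) (by positivity)
  have hC : 0 ≤ Δ ^ 2 / (2 * (1 + Δ)) := by positivity
  simp only [Atilde]
  apply Real.sqrt_lt_sqrt (by linarith) (by linarith)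
end
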